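/- arXiv:2312.00086 — 13 statements merged into one kernel-verified Lean document; each statement's English description precedes it below -/
import Mathlib

section
/- For every graph H, the map sending each ordered pair (u,v) (with uv an edge of H) to the unordered edge {u,v} is a locally bijective homomorphism from L*(H) to the line graph L(H). In particular, L*(H) is a 2-lift of L(H). -/
open SimpleGraph

/-- Locally bijective homomorphism between simple graphs. -/
def IsLBH {V W : Type*} (G : SimpleGraph V) (H : SimpleGraph W) (psi : V → W) : Prop :=
  (∀ ⦃u v⦄, G.Adj u v → H.Adj (psi u) (psi v)) ∧
    ∀ v, Set.BijOn psi (G.neighborSet v) (H.neighborSet (psi v))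

/-- Vertex set of the oriented line graph of `H`: ordered pairs forming an edge of `H`. -/
def OLV {V : Type*} (H : SimpleGraph V) : Type _ := {p : V × V // H.Adj p.1 p.2}

/-- Arc relation of the oriented line graph `L⃗(H)`. -/
def OLArc {V : Type*} (H : SimpleGraph V) (a b : OLV H) : Prop :=
  a.1.2 = b.1.1 ∧ a.1.1 ≠ b.1.2

/-- The underlying undirected graph `L*(H)` of the oriented line graph of `H`. -/
def Lstar {V : Type*} (H : SimpleGraph V) : SimpleGraph (OLV H) :=
  SimpleGraph.fromRel (OLArc H)

/-! The edge map forgets the orientation of `(u, v)`. The neighbours of `(u, v)` in `L*(H)` are the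
`(v, w)` with `w ≠ u` and the `(w, u)` with `w ≠ v`, so of the two orientations of an edge meeting
`uv` in `L(H)` exactly one is a neighbour of `(u, v)`: this is local bijectivity. Every fibre of
the edge map is a pair `{(u, v), (v, u)}`; counting through fibres with cardinals also covers
infinite `H`, where both sides of the count are `0` by the convention of `Nat.card`. -/

universe u

open Cardinal in
theorem Nat.card_eq_mul_of_forall_mk_fiber {α β : Type u} (f : α → β) (n : ℕ)
    (h : ∀ b, #{a // f a = b} = n) : Nat.card α = n * Nat.card β := by
  have hmk : #α = n * #β := by
    rw [← mk_congr (Equiv.sigmaFiberEquiv f), mk_sigma]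
    simp only [h, sum_const', mul_comm]
  have := congrArg toNat hmk
  rwa [toNat_mul, toNat_natCast] at this

namespace OLV

variable {V : Type u} {H : SimpleGraph V}

@[ext]
lemma ext {a b : OLV H} (h : a.1 = b.1) : a = b := Subtype.ext h

def toEdge (a : OLV H) : H.edgeSet := ⟨s(a.1.1, a.1.2), H.mem_edgeSet.mpr a.2⟩

def reverse (a : OLV H) : OLV H := ⟨a.1.swap, a.2.symm⟩

@[simp]
lemma reverse_val (a : OLV H) : a.reverse.1 = a.1.swap := rfl

lemma reverse_ne (a : OLV H) : a.reverse ≠ a := fun h =>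
  a.2.ne (congrArg (fun b : OLV H => b.1.2) h)

lemma toEdge_surjective : Function.Surjective (toEdge (H := H)) := by
  rintro ⟨e, he⟩
  induction e using Sym2.ind with
  | h x y => exact ⟨⟨(x, y), he⟩, rfl⟩

lemma toEdge_eq_toEdge_iff {a b : OLV H} : toEdge b = toEdge a ↔ b = a ∨ b = a.reverse := by
  simp only [toEdge, reverse_val, Subtype.ext_iff, OLV.ext_iff, Sym2.eq_iff, Prod.ext_iff,
    Prod.fst_swap, Prod.snd_swap]

lemma toEdge_reverse (a : OLV H) : a.reverse.toEdge = a.toEdge :=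
  toEdge_eq_toEdge_iff.mpr (Or.inr rfl)

lemma mk_fiber_toEdge (e : H.edgeSet) : Cardinal.mk {b : OLV H // toEdge b = e} = 2 := by
  obtain ⟨a, rfl⟩ := toEdge_surjective e
  have hfiber : {b : OLV H | toEdge b = toEdge a} = {a, a.reverse} := by
    ext b
    exact toEdge_eq_toEdge_iff
  change Cardinal.mk {b : OLV H | toEdge b = toEdge a} = 2
  rw [hfiber, Cardinal.mk_insert (by simpa using (reverse_ne a).symm), Cardinal.mk_singleton]
  norm_num

end OLV

namespace Lstar

variable {V : Type u} {H : SimpleGraph V}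

lemma adj_iff {a b : OLV H} :
    (Lstar H).Adj a b ↔ (a.1.2 = b.1.1 ∧ a.1.1 ≠ b.1.2) ∨ (b.1.2 = a.1.1 ∧ b.1.1 ≠ a.1.2) := by
  refine ⟨fun h => h.2, fun h => ⟨?_, h⟩⟩
  rintro rfl
  rcases h with ⟨h, -⟩ | ⟨h, -⟩
  · exact a.2.ne h.symm
  · exact a.2.ne h.symm

lemma not_adj_reverse {a b : OLV H} (h : (Lstar H).Adj a b) : ¬(Lstar H).Adj a b.reverse := by
  have ha := a.2.ne
  have hb := b.2.ne
  simp only [adj_iff, OLV.reverse_val, Prod.fst_swap, Prod.snd_swap] at h ⊢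
  grind

lemma lineGraph_adj_toEdge_iff {a b : OLV H} :
    H.lineGraph.Adj a.toEdge b.toEdge ↔ (Lstar H).Adj a b ∨ (Lstar H).Adj a b.reverse := by
  have ha := a.2.ne
  have hb := b.2.ne
  rw [lineGraph_adj_iff_exists, ne_comm, Ne, OLV.toEdge_eq_toEdge_iff]
  simp only [adj_iff, OLV.ext_iff, OLV.reverse_val, OLV.toEdge, Prod.ext_iff, Prod.fst_swap,
    Prod.snd_swap, Sym2.mem_iff, or_and_right, exists_or, exists_eq_left]
  grind

theorem isLBH_toEdge : IsLBH (Lstar H) H.lineGraph OLV.toEdge := by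
  have hom : ∀ ⦃a b : OLV H⦄, (Lstar H).Adj a b → H.lineGraph.Adj a.toEdge b.toEdge :=
    fun _ _ h => lineGraph_adj_toEdge_iff.mpr (Or.inl h)
  refine ⟨hom, fun a => ⟨fun _ hb => hom hb, ?_, ?_⟩⟩
  · intro b hb b' hb' hbb'
    rcases OLV.toEdge_eq_toEdge_iff.mp hbb'.symm with rfl | rfl
    · rfl
    · exact absurd hb' (not_adj_reverse hb)
  · intro e he
    obtain ⟨b, rfl⟩ := OLV.toEdge_surjective e
    rcases lineGraph_adj_toEdge_iff.mp he with hb | hb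
    · exact ⟨b, hb, rfl⟩
    · exact ⟨b.reverse, hb, b.toEdge_reverse⟩

end Lstar

theorem stmt1_general {V : Type*} (H : SimpleGraph V) :
    IsLBH (Lstar H) H.lineGraph
      (fun a => (⟨s(a.1.1, a.1.2), H.mem_edgeSet.mpr a.2⟩ : H.edgeSet)) ∧
      Nat.card (OLV H) = 2 * Nat.card H.edgeSet :=
  ⟨Lstar.isLBH_toEdge, Nat.card_eq_mul_of_forall_mk_fiber OLV.toEdge 2 OLV.mk_fiber_toEdge⟩

theorem stmt1 {V : Type*} [Fintype V] [DecidableEq V] (H : SimpleGraph V)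
    [DecidableRel H.Adj] :
    IsLBH (Lstar H) H.lineGraph
      (fun a => (⟨s(a.1.1, a.1.2), H.mem_edgeSet.mpr a.2⟩ : H.edgeSet)) ∧
      Nat.card (OLV H) = 2 * Nat.card H.edgeSet :=
  stmt1_general H
end

section
/- If ψ is a locally bijective homomorphism from a graph G to a graph H, then the induced map on edges ψ'(uv) = ψ(u)ψ(v) is a locally bijective homomorphism from the line graph L(G) to the line graph L(H). -/
open SimpleGraph

/-- decompose an edge at a member vertex -/
lemma edge_decomp {V : Type*} {G : SimpleGraph V} {e : Sym2 V} (he : e ∈ G.edgeSet)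
    {v : V} (hv : v ∈ e) : ∃ u, e = s(v, u) ∧ G.Adj v u := by
  refine ⟨Sym2.Mem.other hv, (Sym2.other_spec hv).symm, ?_⟩
  rw [← SimpleGraph.mem_edgeSet, Sym2.other_spec hv]
  exact he

theorem stmt2 {V W : Type*} (G : SimpleGraph V) (H : SimpleGraph W) (psi : V → W)
    (hpsi : IsLBH G H psi) :
    ∃ psi' : G.edgeSet → H.edgeSet,
      (∀ e : G.edgeSet, (psi' e : Sym2 W) = Sym2.map psi (e : Sym2 V)) ∧
        IsLBH G.lineGraph H.lineGraph psi' := by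
  obtain ⟨hhom, hbij⟩ := hpsi
  have hmem : ∀ e : G.edgeSet, Sym2.map psi (e : Sym2 V) ∈ H.edgeSet := by
    rintro ⟨e, he⟩
    induction e with
    | _ x y =>
      simpa using hhom (G.mem_edgeSet.mp he)
  refine ⟨fun e => ⟨Sym2.map psi e, hmem e⟩, fun e => rfl, ?_, ?_⟩
  · -- homomorphism
    rintro e₁ e₂ h
    rw [lineGraph_adj_iff_exists] at h ⊢
    obtain ⟨hne, v, hv₁, hv₂⟩ := h
    obtain ⟨a, ha, hadj_a⟩ := edge_decomp e₁.2 hv₁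
    obtain ⟨b, hb, hadj_b⟩ := edge_decomp e₂.2 hv₂
    have hab : a ≠ b := by
      rintro rfl
      exact hne (Subtype.ext (ha.trans hb.symm))
    constructor
    · intro hc
      have hc' : Sym2.map psi (e₁ : Sym2 V) = Sym2.map psi (e₂ : Sym2 V) :=
        congrArg Subtype.val hc
      rw [ha, hb] at hc'
      simp only [Sym2.map_pair_eq, Sym2.eq_iff] at hc'
      rcases hc' with ⟨_, hcc⟩ | ⟨h1, h2⟩
      · exact hab ((hbij v).2.1 hadj_a hadj_b hcc)
      · exact (hhom hadj_b).ne h1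
    · exact ⟨psi v, by simp [ha], by simp [hb]⟩
  · -- local bijectivity
    intro e
    refine ⟨?_, ?_, ?_⟩
    · -- maps to : follows from homomorphism part; redo
      intro f hf
      rw [SimpleGraph.mem_neighborSet] at hf ⊢
      rw [lineGraph_adj_iff_exists] at hf ⊢
      obtain ⟨hne, v, hv₁, hv₂⟩ := hf
      obtain ⟨a, ha, hadj_a⟩ := edge_decomp e.2 hv₁
      obtain ⟨b, hb, hadj_b⟩ := edge_decomp f.2 hv₂
      have hab : a ≠ b := by
        rintro rfl
        exact hne (Subtype.ext (hb.trans ha.symm)).symm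
      constructor
      · intro hc
        have hc' : Sym2.map psi (e : Sym2 V) = Sym2.map psi (f : Sym2 V) :=
          congrArg Subtype.val hc
        rw [ha, hb] at hc'
        simp only [Sym2.map_pair_eq, Sym2.eq_iff] at hc'
        rcases hc' with ⟨_, hcc⟩ | ⟨h1, h2⟩
        · exact hab ((hbij v).2.1 hadj_a hadj_b hcc)
        · exact (hhom hadj_b).ne h1
      · exact ⟨psi v, by simp [ha], by simp [hb]⟩
    · -- injective on neighborhood
      intro f₁ hf₁ f₂ hf₂ heq
      rw [SimpleGraph.mem_neighborSet, lineGraph_adj_iff_exists] at hf₁ hf₂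
      obtain ⟨hne₁, v₁, hv₁e, hv₁f⟩ := hf₁
      obtain ⟨hne₂, v₂, hv₂e, hv₂f⟩ := hf₂
      obtain ⟨c₁, hc₁, hadj₁⟩ := edge_decomp f₁.2 hv₁f
      obtain ⟨c₂, hc₂, hadj₂⟩ := edge_decomp f₂.2 hv₂f
      have heq' : Sym2.map psi (f₁ : Sym2 V) = Sym2.map psi (f₂ : Sym2 V) :=
        congrArg Subtype.val heq
      rw [hc₁, hc₂] at heq'
      simp only [Sym2.map_pair_eq, Sym2.eq_iff] at heq'
      by_cases hvv : v₁ = v₂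
      · subst hvv
        rcases heq' with ⟨_, hcc⟩ | ⟨h1, h2⟩
        · have : c₁ = c₂ := (hbij v₁).2.1 hadj₁ hadj₂ hcc
          exact Subtype.ext (by rw [hc₁, hc₂, this])
        · exact absurd h1 (hhom hadj₂).ne
      · -- v₁ ≠ v₂ are both in e, so e = s(v₁, v₂)
        have he : (e : Sym2 V) = s(v₁, v₂) := (Sym2.mem_and_mem_iff hvv).mp ⟨hv₁e, hv₂e⟩
        have hadj_e : G.Adj v₁ v₂ := G.mem_edgeSet.mp (he ▸ e.2)
        rcases heq' with ⟨h1, _⟩ | ⟨h1, h2⟩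
        · exact absurd h1 (hhom hadj_e).ne
        · -- psi v₁ = psi c₂, psi c₁ = psi v₂
          have hv₁c₂ : v₁ = c₂ := (hbij v₂).2.1 hadj_e.symm hadj₂ h1
          have hc₁v₂ : c₁ = v₂ := (hbij v₁).2.1 hadj₁ hadj_e h2
          exfalso
          apply hne₁
          exact Subtype.ext (by rw [hc₁, hc₁v₂, he])
    · -- surjective on neighborhood
      intro g hg
      rw [SimpleGraph.mem_neighborSet, lineGraph_adj_iff_exists] at hg
      obtain ⟨hne, w, hwe, hwg⟩ := hg
      obtain ⟨v, hve, hvw⟩ := Sym2.mem_map.mp hwe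
      obtain ⟨u, hu, hadj_u⟩ := edge_decomp g.2 hwg
      have hu' : u ∈ H.neighborSet (psi v) := by
        rw [SimpleGraph.mem_neighborSet, hvw]; exact hadj_u
      obtain ⟨c, hc, hcu⟩ := (hbij v).2.2 hu'
      rw [SimpleGraph.mem_neighborSet] at hc
      refine ⟨⟨s(v, c), G.mem_edgeSet.mpr hc⟩, ?_, ?_⟩
      · rw [SimpleGraph.mem_neighborSet, lineGraph_adj_iff_exists]
        have hpsif : Sym2.map psi s(v, c) = (g : Sym2 W) := by
          rw [Sym2.map_pair_eq, hvw, hcu, hu]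
        constructor
        · intro hc'
          apply hne
          apply Subtype.ext
          show Sym2.map psi (e : Sym2 V) = (g : Sym2 W)
          rw [← hpsif]
          exact congrArg (Sym2.map psi) (congrArg Subtype.val hc')
        · exact ⟨v, hve, Sym2.mem_mk_left v c⟩
      · apply Subtype.ext
        show Sym2.map psi s(v, c) = (g : Sym2 W)
        rw [Sym2.map_pair_eq, hvw, hcu, hu]
end

section
/- Let G be a 3-regular graph and H a triangle-free 3-regular graph. Then there exists a locally bijective homomorphism from G to H if and only if there exists a locally bijective homomorphism from L(G) to L(H). -/
open SimpleGraph

section Aux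

variable {V W : Type*}

lemma bijOn_aux {f : V → W} {s : Set V} {t : Set W} (ht : t.Finite)
    (hm : Set.MapsTo f s t) (hi : Set.InjOn f s) (hcard : t.ncard ≤ s.ncard) :
    Set.BijOn f s t := by
  have himg : f '' s = t := by
    apply Set.eq_of_subset_of_ncard_le (Set.image_subset_iff.mpr hm) ?_ ht
    rwa [Set.ncard_image_of_injOn hi]
  exact ⟨hm, hi, himg.ge⟩

lemma sym2_rep (z : Sym2 V) : ∃ u v, z = s(u, v) := by
  induction z using Sym2.ind with
  | _ u v => exact ⟨u, v, rfl⟩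

variable {G : SimpleGraph V}

lemma edge_rep {e : Sym2 V} (he : e ∈ G.edgeSet) {x : V} (hx : x ∈ e) :
    ∃ w, e = s(x, w) ∧ G.Adj x w := by
  classical
  refine ⟨Sym2.Mem.other' hx, (Sym2.other_spec' hx).symm, ?_⟩
  exact (SimpleGraph.mem_edgeSet G).mp (by rw [Sym2.other_spec' hx]; exact he)

lemma line_adj_rep {e f : G.edgeSet} {u v : V} (he : (e : Sym2 V) = s(u, v))
    (h : G.lineGraph.Adj e f) :
    ∃ x w, (x = u ∨ x = v) ∧ (f : Sym2 V) = s(x, w) ∧ G.Adj x w ∧ w ≠ u ∧ w ≠ v := by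
  obtain ⟨hne, z, hz1, hz2⟩ := lineGraph_adj_iff_exists.mp h
  have hzuv : z = u ∨ z = v := by rw [he] at hz1; simpa using hz1
  obtain ⟨w, hfw, hadj⟩ := edge_rep f.2 hz2
  refine ⟨z, w, hzuv, hfw, hadj, ?_, ?_⟩
  · rintro rfl
    rcases hzuv with rfl | rfl
    · exact hadj.ne rfl
    · exact hne (Subtype.ext (by rw [hfw, he, Sym2.eq_swap])).symm
  · rintro rfl
    rcases hzuv with rfl | rfl
    · exact hne (Subtype.ext (by rw [hfw, he])).symm
    · exact hadj.ne rfl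

lemma common_vertex {H : SimpleGraph W} (hHtf : H.CliqueFree 3)
    {d1 d2 d3 : Sym2 W} (h1 : d1 ∈ H.edgeSet) (h2 : d2 ∈ H.edgeSet) (h3 : d3 ∈ H.edgeSet)
    (h12 : d1 ≠ d2)
    (i12 : ∃ x, x ∈ d1 ∧ x ∈ d2) (i13 : ∃ x, x ∈ d1 ∧ x ∈ d3)
    (i23 : ∃ x, x ∈ d2 ∧ x ∈ d3) :
    ∃ x, x ∈ d1 ∧ x ∈ d2 ∧ x ∈ d3 := by
  classical
  obtain ⟨x, hx1, hx2⟩ := i12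
  by_cases hx3 : x ∈ d3
  · exact ⟨x, hx1, hx2, hx3⟩
  obtain ⟨a, hd1, hxa⟩ := edge_rep h1 hx1
  obtain ⟨b, hd2, hxb⟩ := edge_rep h2 hx2
  have hab : a ≠ b := by rintro rfl; exact h12 (hd1.trans hd2.symm)
  have ha3 : a ∈ d3 := by
    obtain ⟨y, hy1, hy3⟩ := i13
    rw [hd1, Sym2.mem_iff] at hy1
    rcases hy1 with rfl | rfl
    · exact absurd hy3 hx3
    · exact hy3
  have hb3 : b ∈ d3 := by
    obtain ⟨y, hy2, hy3⟩ := i23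
    rw [hd2, Sym2.mem_iff] at hy2
    rcases hy2 with rfl | rfl
    · exact absurd hy3 hx3
    · exact hy3
  have hd3 : d3 = s(a, b) := ((Sym2.mem_and_mem_iff hab).mp ⟨ha3, hb3⟩)
  have hadj : H.Adj a b := (SimpleGraph.mem_edgeSet H).mp (hd3 ▸ h3)
  exact absurd (SimpleGraph.is3Clique_triple_iff.mpr ⟨hxa, hxb, hadj⟩) (hHtf {x, a, b})

end Aux
section Fwd

variable {V W : Type*} {G : SimpleGraph V} {H : SimpleGraph W}

lemma map_edge {ψ : V → W} (hom : ∀ ⦃u v⦄, G.Adj u v → H.Adj (ψ u) (ψ v)) :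
    ∀ e : G.edgeSet, Sym2.map ψ (e : Sym2 V) ∈ H.edgeSet := by
  rintro ⟨e, he⟩
  induction e using Sym2.ind with
  | _ u v => simpa using hom (by simpa using he)

lemma forward {ψ : V → W} (h : IsLBH G H ψ) :
    ∃ φ : G.edgeSet → H.edgeSet, IsLBH G.lineGraph H.lineGraph φ := by
  obtain ⟨hom, hbij⟩ := h
  have hinj : ∀ (z : V) {a b : V}, G.Adj z a → G.Adj z b → ψ a = ψ b → a = b :=
    fun z a b ha hb hab => (hbij z).injOn ha hb hab
  refine ⟨fun e => ⟨Sym2.map ψ e, map_edge hom e⟩, ?_, ?_⟩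
  · -- homomorphism on line graphs
    rintro e f hef
    obtain ⟨hne, z, hz1, hz2⟩ := lineGraph_adj_iff_exists.mp hef
    obtain ⟨a, he, hza⟩ := edge_rep e.2 hz1
    obtain ⟨b, hf, hzb⟩ := edge_rep f.2 hz2
    have hab : a ≠ b := by rintro rfl; exact hne (Subtype.ext (he.trans hf.symm))
    refine lineGraph_adj_iff_exists.mpr ⟨?_, ψ z, ?_, ?_⟩
    · intro hc
      have hc' : Sym2.map ψ (e : Sym2 V) = Sym2.map ψ (f : Sym2 V) := congrArg Subtype.val hc
      rw [he, hf, Sym2.map_pair_eq, Sym2.map_pair_eq, Sym2.eq_iff] at hc'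
      rcases hc' with ⟨_, h2⟩ | ⟨h1, _⟩
      · exact hab (hinj z hza hzb h2)
      · exact (hom hzb).ne h1
    · show ψ z ∈ Sym2.map ψ (e : Sym2 V); rw [he, Sym2.map_pair_eq]; simp
    · show ψ z ∈ Sym2.map ψ (f : Sym2 V); rw [hf, Sym2.map_pair_eq]; simp
  · -- local bijectivity
    intro e
    obtain ⟨u, v, he⟩ := sym2_rep (e : Sym2 V)
    have huv : G.Adj u v := (SimpleGraph.mem_edgeSet G).mp (he ▸ e.2)
    have heψ : Sym2.map ψ (e : Sym2 V) = s(ψ u, ψ v) := by rw [he, Sym2.map_pair_eq]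
    refine ⟨?_, ?_, ?_⟩
    · -- MapsTo
      intro f hf
      obtain ⟨x, w, hx, hfw, hxw, hwu, hwv⟩ := line_adj_rep he hf
      refine lineGraph_adj_iff_exists.mpr ⟨?_, ψ x, ?_, ?_⟩
      · intro hc
        have hc' : Sym2.map ψ (e : Sym2 V) = Sym2.map ψ (f : Sym2 V) := congrArg Subtype.val hc
        rw [heψ, hfw, Sym2.map_pair_eq, Sym2.eq_iff] at hc'
        rcases hx with rfl | rfl
        · rcases hc' with ⟨_, h2⟩ | ⟨_, h2⟩
          · exact hwv (hinj x huv hxw h2).symm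
          · exact (hom huv).ne h2.symm
        · rcases hc' with ⟨h1, _⟩ | ⟨h1, _⟩
          · exact (hom huv).ne h1
          · exact hwu (hinj _ huv.symm hxw h1).symm
      · show ψ x ∈ Sym2.map ψ (e : Sym2 V)
        rw [heψ]; rcases hx with rfl | rfl <;> simp
      · show ψ x ∈ Sym2.map ψ (f : Sym2 V); rw [hfw, Sym2.map_pair_eq]; simp
    · -- InjOn
      intro f1 hf1 f2 hf2 hval
      obtain ⟨x1, w1, hx1, hfw1, hxw1, hw1u, hw1v⟩ := line_adj_rep he hf1
      obtain ⟨x2, w2, hx2, hfw2, hxw2, hw2u, hw2v⟩ := line_adj_rep he hf2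
      have hval' : Sym2.map ψ (f1 : Sym2 V) = Sym2.map ψ (f2 : Sym2 V) :=
        congrArg Subtype.val hval
      rw [hfw1, hfw2, Sym2.map_pair_eq, Sym2.map_pair_eq, Sym2.eq_iff] at hval'
      apply Subtype.ext
      rw [hfw1, hfw2]
      rcases hx1 with rfl | rfl <;> rcases hx2 with rfl | rfl
      · rcases hval' with ⟨_, h2⟩ | ⟨h1, _⟩
        · rw [hinj _ hxw1 hxw2 h2]
        · exact absurd h1 (hom hxw2).ne
      · rcases hval' with ⟨h1, _⟩ | ⟨h1, _⟩
        · exact absurd h1 (hom huv).ne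
        · exact absurd (hinj _ huv.symm hxw2 h1) hw2u.symm
      · rcases hval' with ⟨h1, _⟩ | ⟨h1, _⟩
        · exact absurd h1.symm (hom huv).ne
        · exact absurd (hinj _ huv hxw2 h1) hw2v.symm
      · rcases hval' with ⟨_, h2⟩ | ⟨h1, _⟩
        · rw [hinj _ hxw1 hxw2 h2]
        · exact absurd h1 (hom hxw2).ne
    · -- SurjOn
      intro f' hf'
      rw [SimpleGraph.mem_neighborSet] at hf'
      obtain ⟨y, w', hy, hf'w, hyw, hwu, hwv⟩ := line_adj_rep heψ hf'
      rcases hy with rfl | rfl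
      · obtain ⟨w, hw, hww⟩ := (hbij u).surjOn (show w' ∈ H.neighborSet (ψ u) from hyw)
        have hwv' : w ≠ v := by rintro rfl; exact hwv hww.symm
        have hadj : G.Adj u w := hw
        refine ⟨⟨s(u, w), (SimpleGraph.mem_edgeSet G).mpr hadj⟩, ?_, ?_⟩
        · refine lineGraph_adj_iff_exists.mpr
            ⟨?_, u, by rw [he]; simp, Sym2.mem_mk_left u w⟩
          intro hc
          have hc' : (e : Sym2 V) = s(u, w) := congrArg Subtype.val hc
          rw [he, Sym2.eq_iff] at hc'
          rcases hc' with ⟨_, h2⟩ | ⟨h1, _⟩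
          · exact hwv' h2.symm
          · exact hadj.ne h1
        · exact Subtype.ext (show Sym2.map ψ s(u, w) = (f' : Sym2 W) by
            rw [Sym2.map_pair_eq, hww, hf'w])
      · obtain ⟨w, hw, hww⟩ := (hbij v).surjOn (show w' ∈ H.neighborSet (ψ v) from hyw)
        have hwu' : w ≠ u := by rintro rfl; exact hwu hww.symm
        have hadj : G.Adj v w := hw
        refine ⟨⟨s(v, w), (SimpleGraph.mem_edgeSet G).mpr hadj⟩, ?_, ?_⟩
        · refine lineGraph_adj_iff_exists.mpr
            ⟨?_, v, by rw [he]; simp, Sym2.mem_mk_left v w⟩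
          intro hc
          have hc' : (e : Sym2 V) = s(v, w) := congrArg Subtype.val hc
          rw [he, Sym2.eq_iff] at hc'
          rcases hc' with ⟨h1, _⟩ | ⟨h1, _⟩
          · exact huv.ne h1
          · exact hwu' h1.symm
        · exact Subtype.ext (show Sym2.map ψ s(v, w) = (f' : Sym2 W) by
            rw [Sym2.map_pair_eq, hww, hf'w])

end Fwd
section Bwd

variable {V : Type*} {G : SimpleGraph V}

lemma line_adj_of_ne {e f : G.edgeSet} {x : V}
    (hx : x ∈ (e : Sym2 V)) (hx' : x ∈ (f : Sym2 V)) (hne : e ≠ f) : G.lineGraph.Adj e f :=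
  lineGraph_adj_iff_exists.mpr ⟨hne, x, hx, hx'⟩

lemma pair_ne_pair₁ {u v a : V} (hva : v ≠ a) (hua : u ≠ a) : s(u, v) ≠ s(u, a) := by
  intro hh
  rw [Sym2.eq_iff] at hh
  rcases hh with ⟨_, h⟩ | ⟨h, _⟩
  · exact hva h
  · exact hua h

lemma pair_ne_pair₂ {u v a c : V} (huv : u ≠ v) (hav : a ≠ v) : s(u, a) ≠ s(v, c) := by
  intro hh
  rw [Sym2.eq_iff] at hh
  rcases hh with ⟨h, _⟩ | ⟨_, h⟩
  · exact huv h
  · exact hav h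

lemma pair_ne_pair₃ {u v c : V} (huv : u ≠ v) (huc : u ≠ c) : s(u, v) ≠ s(v, c) := by
  intro hh
  rw [Sym2.eq_iff] at hh
  rcases hh with ⟨h, _⟩ | ⟨h, _⟩
  · exact huv h
  · exact huc h

end Bwd

theorem stmt4 {V W : Type*} [Fintype V] [Fintype W]
    (G : SimpleGraph V) (H : SimpleGraph W) [DecidableRel G.Adj] [DecidableRel H.Adj]
    (hG : G.IsRegularOfDegree 3) (hH : H.IsRegularOfDegree 3)
    (hHtf : H.CliqueFree 3) :
    (∃ psi : V → W, IsLBH G H psi) ↔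
      ∃ phi : G.edgeSet → H.edgeSet, IsLBH G.lineGraph H.lineGraph phi := by
  constructor
  · rintro ⟨ψ, hψ⟩; exact forward hψ
  · rintro ⟨φ, hom, hbij⟩
    classical
    have key : ∀ v : V, ∃ x : W, ∀ e : G.edgeSet, v ∈ (e : Sym2 V) → x ∈ (φ e : Sym2 W) := by
      intro v
      obtain ⟨a, b, c, hab, hac, hbc, hN⟩ := Finset.card_eq_three.mp (hG v)
      have ha : G.Adj v a := by
        rw [← SimpleGraph.mem_neighborFinset, hN]; simp
      have hb : G.Adj v b := by
        rw [← SimpleGraph.mem_neighborFinset, hN]; simp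
      have hc : G.Adj v c := by
        rw [← SimpleGraph.mem_neighborFinset, hN]; simp
      set E1 : G.edgeSet := ⟨s(v, a), G.mem_edgeSet.mpr ha⟩ with hE1
      set E2 : G.edgeSet := ⟨s(v, b), G.mem_edgeSet.mpr hb⟩ with hE2
      set E3 : G.edgeSet := ⟨s(v, c), G.mem_edgeSet.mpr hc⟩ with hE3
      have h12 : G.lineGraph.Adj E1 E2 :=
        line_adj_of_ne (Sym2.mem_mk_left v a) (Sym2.mem_mk_left v b)
          (fun h => pair_ne_pair₁ hab hb.ne (congrArg Subtype.val h))
      have h13 : G.lineGraph.Adj E1 E3 :=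
        line_adj_of_ne (Sym2.mem_mk_left v a) (Sym2.mem_mk_left v c)
          (fun h => pair_ne_pair₁ hac hc.ne (congrArg Subtype.val h))
      have h23 : G.lineGraph.Adj E2 E3 :=
        line_adj_of_ne (Sym2.mem_mk_left v b) (Sym2.mem_mk_left v c)
          (fun h => pair_ne_pair₁ hbc hc.ne (congrArg Subtype.val h))
      obtain ⟨x, hx1, hx2, hx3⟩ :=
        common_vertex hHtf (φ E1).2 (φ E2).2 (φ E3).2
          (fun h => (hom h12).ne (Subtype.ext h))
          (by obtain ⟨_, z, hz1, hz2⟩ := lineGraph_adj_iff_exists.mp (hom h12)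
              exact ⟨z, hz1, hz2⟩)
          (by obtain ⟨_, z, hz1, hz2⟩ := lineGraph_adj_iff_exists.mp (hom h13)
              exact ⟨z, hz1, hz2⟩)
          (by obtain ⟨_, z, hz1, hz2⟩ := lineGraph_adj_iff_exists.mp (hom h23)
              exact ⟨z, hz1, hz2⟩)
      refine ⟨x, fun e hve => ?_⟩
      obtain ⟨w, hew, hvw⟩ := edge_rep e.2 hve
      have hwmem : w ∈ ({a, b, c} : Finset V) := by
        rw [← hN, SimpleGraph.mem_neighborFinset]; exact hvw
      simp only [Finset.mem_insert, Finset.mem_singleton] at hwmem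
      rcases hwmem with rfl | rfl | rfl
      · have : e = E1 := Subtype.ext (by rw [hew]); rw [this]; exact hx1
      · have : e = E2 := Subtype.ext (by rw [hew]); rw [this]; exact hx2
      · have : e = E3 := Subtype.ext (by rw [hew]); rw [this]; exact hx3
    choose ψ hψ using key
    have hnepsi : ∀ ⦃u v : V⦄, G.Adj u v → ψ u ≠ ψ v := by
      intro u v huv heq
      -- two neighbours of u other than v
      obtain ⟨a, b, hab, hABset⟩ : ∃ a b, a ≠ b ∧ (G.neighborFinset u).erase v = {a, b} := by
        apply Finset.card_eq_two.mp
        rw [Finset.card_erase_of_mem (by rwa [SimpleGraph.mem_neighborFinset])]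
        have h3 : (G.neighborFinset u).card = 3 := hG u
        omega
      have haP := Finset.mem_erase.mp (by rw [hABset]; exact Finset.mem_insert_self a {b})
      have hbP := Finset.mem_erase.mp
        (by rw [hABset]; exact Finset.mem_insert_of_mem (Finset.mem_singleton_self b))
      have hav : a ≠ v := haP.1
      have hbv : b ≠ v := hbP.1
      have hua : G.Adj u a := (SimpleGraph.mem_neighborFinset _ _ _).mp haP.2
      have hub : G.Adj u b := (SimpleGraph.mem_neighborFinset _ _ _).mp hbP.2
      -- two neighbours of v other than u
      obtain ⟨c, d, hcd, hCDset⟩ : ∃ c d, c ≠ d ∧ (G.neighborFinset v).erase u = {c, d} := by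
        apply Finset.card_eq_two.mp
        rw [Finset.card_erase_of_mem (by rw [SimpleGraph.mem_neighborFinset]; exact huv.symm)]
        have h3 : (G.neighborFinset v).card = 3 := hG v
        omega
      have hcP := Finset.mem_erase.mp (by rw [hCDset]; exact Finset.mem_insert_self c {d})
      have hdP := Finset.mem_erase.mp
        (by rw [hCDset]; exact Finset.mem_insert_of_mem (Finset.mem_singleton_self d))
      have hcu : c ≠ u := hcP.1
      have hdu : d ≠ u := hdP.1
      have hvc : G.Adj v c := (SimpleGraph.mem_neighborFinset _ _ _).mp hcP.2
      have hvd : G.Adj v d := (SimpleGraph.mem_neighborFinset _ _ _).mp hdP.2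
      set E : G.edgeSet := ⟨s(u, v), G.mem_edgeSet.mpr huv⟩ with hE
      set F1 : G.edgeSet := ⟨s(u, a), G.mem_edgeSet.mpr hua⟩ with hF1
      set F2 : G.edgeSet := ⟨s(u, b), G.mem_edgeSet.mpr hub⟩ with hF2
      set G1 : G.edgeSet := ⟨s(v, c), G.mem_edgeSet.mpr hvc⟩ with hG1
      set G2 : G.edgeSet := ⟨s(v, d), G.mem_edgeSet.mpr hvd⟩ with hG2
      have mF1 : F1 ∈ G.lineGraph.neighborSet E :=
        line_adj_of_ne (Sym2.mem_mk_left u v) (Sym2.mem_mk_left u a)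
          (fun h => pair_ne_pair₁ (Ne.symm hav) hua.ne (congrArg Subtype.val h))
      have mF2 : F2 ∈ G.lineGraph.neighborSet E :=
        line_adj_of_ne (Sym2.mem_mk_left u v) (Sym2.mem_mk_left u b)
          (fun h => pair_ne_pair₁ (Ne.symm hbv) hub.ne (congrArg Subtype.val h))
      have mG1 : G1 ∈ G.lineGraph.neighborSet E :=
        line_adj_of_ne (Sym2.mem_mk_right u v) (Sym2.mem_mk_left v c)
          (fun h => pair_ne_pair₃ huv.ne (Ne.symm hcu) (congrArg Subtype.val h))
      have mG2 : G2 ∈ G.lineGraph.neighborSet E :=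
        line_adj_of_ne (Sym2.mem_mk_right u v) (Sym2.mem_mk_left v d)
          (fun h => pair_ne_pair₃ huv.ne (Ne.symm hdu) (congrArg Subtype.val h))
      have inj := (hbij E).injOn
      have n12 : φ F1 ≠ φ F2 := fun h =>
        pair_ne_pair₁ hab hub.ne (congrArg Subtype.val (inj mF1 mF2 h))
      have n13 : φ F1 ≠ φ G1 := fun h =>
        pair_ne_pair₂ huv.ne hav (congrArg Subtype.val (inj mF1 mG1 h))
      have n14 : φ F1 ≠ φ G2 := fun h =>
        pair_ne_pair₂ huv.ne hav (congrArg Subtype.val (inj mF1 mG2 h))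
      have n23 : φ F2 ≠ φ G1 := fun h =>
        pair_ne_pair₂ huv.ne hbv (congrArg Subtype.val (inj mF2 mG1 h))
      have n24 : φ F2 ≠ φ G2 := fun h =>
        pair_ne_pair₂ huv.ne hbv (congrArg Subtype.val (inj mF2 mG2 h))
      have n34 : φ G1 ≠ φ G2 := fun h =>
        pair_ne_pair₁ hcd hvd.ne (congrArg Subtype.val (inj mG1 mG2 h))
      have m1 : ψ u ∈ (φ F1 : Sym2 W) := hψ u F1 (Sym2.mem_mk_left u a)
      have m2 : ψ u ∈ (φ F2 : Sym2 W) := hψ u F2 (Sym2.mem_mk_left u b)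
      have m3 : ψ u ∈ (φ G1 : Sym2 W) := by rw [heq]; exact hψ v G1 (Sym2.mem_mk_left v c)
      have m4 : ψ u ∈ (φ G2 : Sym2 W) := by rw [heq]; exact hψ v G2 (Sym2.mem_mk_left v d)
      set y1 := Sym2.Mem.other' m1 with hy1
      set y2 := Sym2.Mem.other' m2 with hy2
      set y3 := Sym2.Mem.other' m3 with hy3
      set y4 := Sym2.Mem.other' m4 with hy4
      have hadj1 : H.Adj (ψ u) y1 :=
        H.mem_edgeSet.mp (by rw [Sym2.other_spec' m1]; exact (φ F1).2)
      have hadj2 : H.Adj (ψ u) y2 :=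
        H.mem_edgeSet.mp (by rw [Sym2.other_spec' m2]; exact (φ F2).2)
      have hadj3 : H.Adj (ψ u) y3 :=
        H.mem_edgeSet.mp (by rw [Sym2.other_spec' m3]; exact (φ G1).2)
      have hadj4 : H.Adj (ψ u) y4 :=
        H.mem_edgeSet.mp (by rw [Sym2.other_spec' m4]; exact (φ G2).2)
      have yne : ∀ {z z' : W} {f g : H.edgeSet} (hz : z ∈ (f : Sym2 W))
          (hz' : z' ∈ (g : Sym2 W)), z = z' → Sym2.Mem.other' hz = Sym2.Mem.other' hz' →
          f = g := by
        rintro z z' f g hz hz' rfl hoth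
        apply Subtype.ext
        rw [← Sym2.other_spec' hz, ← Sym2.other_spec' hz', hoth]
      have y12 : y1 ≠ y2 := fun h => n12 (yne m1 m2 rfl h)
      have y13 : y1 ≠ y3 := fun h => n13 (yne m1 m3 rfl h)
      have y14 : y1 ≠ y4 := fun h => n14 (yne m1 m4 rfl h)
      have y23 : y2 ≠ y3 := fun h => n23 (yne m2 m3 rfl h)
      have y24 : y2 ≠ y4 := fun h => n24 (yne m2 m4 rfl h)
      have y34 : y3 ≠ y4 := fun h => n34 (yne m3 m4 rfl h)
      have hsub : ({y1, y2, y3, y4} : Finset W) ⊆ H.neighborFinset (ψ u) := by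
        intro z hz
        rw [SimpleGraph.mem_neighborFinset]
        simp only [Finset.mem_insert, Finset.mem_singleton] at hz
        rcases hz with rfl | rfl | rfl | rfl
        exacts [hadj1, hadj2, hadj3, hadj4]
      have hcard : ({y1, y2, y3, y4} : Finset W).card = 4 := by
        rw [Finset.card_insert_of_notMem (by simp [y12, y13, y14]),
          Finset.card_insert_of_notMem (by simp [y23, y24]),
          Finset.card_insert_of_notMem (by simp [y34]), Finset.card_singleton]
      have hle := Finset.card_le_card hsub
      have hdeg : (H.neighborFinset (ψ u)).card = 3 := hH (ψ u)
      rw [hcard, hdeg] at hle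
      omega
    have homψ : ∀ ⦃u v : V⦄, G.Adj u v → H.Adj (ψ u) (ψ v) := by
      intro u v huv
      have h1 : ψ u ∈ (φ ⟨s(u, v), G.mem_edgeSet.mpr huv⟩ : Sym2 W) :=
        hψ u _ (Sym2.mem_mk_left u v)
      have h2 : ψ v ∈ (φ ⟨s(u, v), G.mem_edgeSet.mpr huv⟩ : Sym2 W) :=
        hψ v _ (Sym2.mem_mk_right u v)
      have hval := (Sym2.mem_and_mem_iff (hnepsi huv)).mp ⟨h1, h2⟩
      exact H.mem_edgeSet.mp (by rw [← hval]; exact (φ _).2)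
    refine ⟨ψ, fun u v h => homψ h, fun v => ?_⟩
    -- local bijectivity of ψ
    have hmap : Set.MapsTo ψ (G.neighborSet v) (H.neighborSet (ψ v)) := by
      intro u hu
      exact homψ hu
    have hinj : Set.InjOn ψ (G.neighborSet v) := by
      intro u1 hu1 u2 hu2 heq
      have hu1' : G.Adj v u1 := hu1
      have hu2' : G.Adj v u2 := hu2
      obtain ⟨c, hcmem⟩ : (((G.neighborFinset v).erase u1).erase u2).Nonempty := by
        rw [← Finset.card_pos]
        have h1 : ((G.neighborFinset v).erase u1).card = 2 := by
          rw [Finset.card_erase_of_mem (by rwa [SimpleGraph.mem_neighborFinset])]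
          have h3 : (G.neighborFinset v).card = 3 := hG v
          omega
        have h2 := Finset.pred_card_le_card_erase
          (s := (G.neighborFinset v).erase u1) (a := u2)
        omega
      obtain ⟨hcu2, hcu1, hcN⟩ :
          c ≠ u2 ∧ c ≠ u1 ∧ c ∈ G.neighborFinset v := by
        obtain ⟨h2', hrest⟩ := Finset.mem_erase.mp hcmem
        obtain ⟨h1', hN⟩ := Finset.mem_erase.mp hrest
        exact ⟨h2', h1', hN⟩
      have hvc : G.Adj v c := (SimpleGraph.mem_neighborFinset _ _ _).mp hcN
      set E1 : G.edgeSet := ⟨s(v, u1), G.mem_edgeSet.mpr hu1'⟩ with hE1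
      set E2 : G.edgeSet := ⟨s(v, u2), G.mem_edgeSet.mpr hu2'⟩ with hE2
      set E3 : G.edgeSet := ⟨s(v, c), G.mem_edgeSet.mpr hvc⟩ with hE3
      have mE1 : E1 ∈ G.lineGraph.neighborSet E3 :=
        line_adj_of_ne (Sym2.mem_mk_left v c) (Sym2.mem_mk_left v u1)
          (fun h => pair_ne_pair₁ hcu1 hu1'.ne (congrArg Subtype.val h))
      have mE2 : E2 ∈ G.lineGraph.neighborSet E3 :=
        line_adj_of_ne (Sym2.mem_mk_left v c) (Sym2.mem_mk_left v u2)
          (fun h => pair_ne_pair₁ hcu2 hu2'.ne (congrArg Subtype.val h))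
      have hval1 : (φ E1 : Sym2 W) = s(ψ v, ψ u1) :=
        (Sym2.mem_and_mem_iff (hnepsi hu1')).mp
          ⟨hψ v E1 (Sym2.mem_mk_left v u1), hψ u1 E1 (Sym2.mem_mk_right v u1)⟩
      have hval2 : (φ E2 : Sym2 W) = s(ψ v, ψ u2) :=
        (Sym2.mem_and_mem_iff (hnepsi hu2')).mp
          ⟨hψ v E2 (Sym2.mem_mk_left v u2), hψ u2 E2 (Sym2.mem_mk_right v u2)⟩
      have hEeq : E1 = E2 := by
        apply (hbij E3).injOn mE1 mE2
        apply Subtype.ext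
        rw [hval1, hval2, heq]
      have : s(v, u1) = s(v, u2) := congrArg Subtype.val hEeq
      rw [Sym2.eq_iff] at this
      rcases this with ⟨_, h⟩ | ⟨_, h⟩
      · exact h
      · exact absurd h hu1'.ne'
    have hncG : (G.neighborSet v).ncard = 3 := by
      rw [Set.ncard_eq_toFinset_card']
      exact hG v
    have hncH : (H.neighborSet (ψ v)).ncard = 3 := by
      rw [Set.ncard_eq_toFinset_card']
      exact hH (ψ v)
    exact bijOn_aux (Set.toFinite _) hmap hinj (by rw [hncG, hncH])
end

section
/- Let p ≥ 2 and let (G⃗, f) be a (p+2)-coloured orientation of a 2p-regular graph G. Then f is a star colouring of G if and only if every bicoloured component of (G, f) is isomorphic to the star K_{1,p}. -/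
/-!
Write `d_v(c)` for the number of neighbours of `v` coloured `c`, and call the arc `v → w` central
when `d_v(f w) ≥ 2`. In a star colouring the reverse of a central arc is never central (the two
colour classes would contain a bicoloured `P₄`), so the central out- and in-arcs at `v` are
disjoint sets of neighbours and `out(v) + in(v) ≤ 2p`. On the other hand the `2p` neighbours of
`v` are spread over the `p + 1` colours other than `f v`, which forces `out(v) ≥ p`. As the total
out-degree equals the total in-degree, `out(v) = in(v) = p` for every `v`. Equality pins down the
neighbourhood: one colour occurs `p` times and every other colour once, and every edge is central
in one of its directions. So each bicoloured component consists of a vertex with `d_v(c) = p`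
together with those `p` neighbours. Conversely, `K_{1,p}` contains no path on four vertices.
-/

open SimpleGraph

/-- `A` is an orientation of the simple graph `G`. -/
def IsOrientation {V : Type*} (G : SimpleGraph V) (A : V → V → Prop) : Prop :=
  (∀ u v, G.Adj u v ↔ (A u v ∨ A v u)) ∧ ∀ u v, A u v → ¬ A v u

/-- `f` is a proper colouring of `G`. -/
def IsProperColoring {V α : Type*} (G : SimpleGraph V) (f : V → α) : Prop :=
  ∀ ⦃u v⦄, G.Adj u v → f u ≠ f v

/-- `f` is a star colouring of `G`: a proper colouring with no bicoloured 4-vertex path. -/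
def IsStarColoring {V α : Type*} (G : SimpleGraph V) (f : V → α) : Prop :=
  (∀ ⦃u v⦄, G.Adj u v → f u ≠ f v) ∧
    ∀ a b c d, G.Adj a b → G.Adj b c → G.Adj c d →
      a ≠ c → b ≠ d → a ≠ d → ¬(f a = f c ∧ f b = f d)

open Finset

section Arithmetic

variable {ι : Type*} {s : Finset ι} {d : ι → ℕ} {p : ℕ}

lemma le_sum_filter_two_le (hp : 2 ≤ p) (hs : #s = p + 1) (hsum : ∑ i ∈ s, d i = 2 * p) :
    p ≤ ∑ i ∈ s with 2 ≤ d i, d i := by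
  have hsplit : ∑ i ∈ s with 2 ≤ d i, d i + ∑ i ∈ s with ¬2 ≤ d i, d i = 2 * p :=
    (sum_filter_add_sum_filter_not s _ d).trans hsum
  have hcard : #{i ∈ s | 2 ≤ d i} + #{i ∈ s | ¬2 ≤ d i} = p + 1 :=
    (card_filter_add_card_filter_not _).trans hs
  have hbig : 2 * #{i ∈ s | 2 ≤ d i} ≤ ∑ i ∈ s with 2 ≤ d i, d i := by
    simpa [mul_comm] using card_nsmul_le_sum _ d 2 fun i hi => (mem_filter.mp hi).2
  have hle_one : ∀ i ∈ s.filter (¬2 ≤ d ·), d i ≤ 1 := fun i hi => by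
    have := (mem_filter.mp hi).2
    omega
  have hsmall : ∑ i ∈ s with ¬2 ≤ d i, d i ≤ #{i ∈ s | ¬2 ≤ d i} := by
    simpa using sum_le_card_nsmul _ d 1 hle_one
  have hempty : #{i ∈ s | 2 ≤ d i} = 0 → ∑ i ∈ s with 2 ≤ d i, d i = 0 := fun h => by
    rw [card_eq_zero.mp h, sum_empty]
  omega

lemma eq_one_or_eq_of_sum_filter_two_le_le (hp : 2 ≤ p) (hs : #s = p + 1)
    (hsum : ∑ i ∈ s, d i = 2 * p) (hle : ∑ i ∈ s with 2 ≤ d i, d i ≤ p) :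
    ∀ i ∈ s, d i = 1 ∨ d i = p := by
  have hsplit : ∑ i ∈ s with 2 ≤ d i, d i + ∑ i ∈ s with ¬2 ≤ d i, d i = 2 * p :=
    (sum_filter_add_sum_filter_not s _ d).trans hsum
  have hcard : #{i ∈ s | 2 ≤ d i} + #{i ∈ s | ¬2 ≤ d i} = p + 1 :=
    (card_filter_add_card_filter_not _).trans hs
  have hbig : 2 * #{i ∈ s | 2 ≤ d i} ≤ ∑ i ∈ s with 2 ≤ d i, d i := by
    simpa [mul_comm] using card_nsmul_le_sum _ d 2 fun i hi => (mem_filter.mp hi).2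
  have hle_one : ∀ i ∈ s.filter (¬2 ≤ d ·), d i ≤ 1 := fun i hi => by
    have := (mem_filter.mp hi).2
    omega
  have hsmall : ∑ i ∈ s with ¬2 ≤ d i, d i ≤ #{i ∈ s | ¬2 ≤ d i} := by
    simpa using sum_le_card_nsmul _ d 1 hle_one
  have hge := le_sum_filter_two_le hp hs hsum
  have hempty : #{i ∈ s | 2 ≤ d i} = 0 → ∑ i ∈ s with 2 ≤ d i, d i = 0 := fun h => by
    rw [card_eq_zero.mp h, sum_empty]
  intro i hi
  by_cases hi2 : 2 ≤ d i
  · obtain ⟨j, hj⟩ := card_eq_one.mp (show #{i ∈ s | 2 ≤ d i} = 1 by omega)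
    have hij : i = j := mem_singleton.mp (hj ▸ mem_filter.mpr ⟨hi, hi2⟩)
    rw [hj, sum_singleton, ← hij] at hge hle
    omega
  · have hones : ∑ i ∈ s with ¬2 ≤ d i, d i = ∑ i ∈ s with ¬2 ≤ d i, 1 := by
      rw [← card_eq_sum_ones]
      omega
    exact Or.inl ((sum_eq_sum_iff_of_le hle_one).mp hones i (mem_filter.mpr ⟨hi, hi2⟩))

end Arithmetic

lemma card_filter_rel_eq_of_le_of_add_le {W : Type*} [Fintype W] (R : W → W → Prop)
    [DecidableRel R] {k : ℕ} (hout : ∀ v, k ≤ #{w | R v w})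
    (hdeg : ∀ v, #{w | R v w} + #{w | R w v} ≤ 2 * k) (v : W) :
    #{w | R v w} = k ∧ #{w | R w v} = k := by
  have hswap : ∑ v, #{w | R w v} = ∑ v, #{w | R v w} := by
    simp only [card_filter]
    exact sum_comm
  have hin : ∀ v, #{w | R w v} ≤ k := fun v => by
    have := hout v
    have := hdeg v
    omega
  have hin_eq : ∀ v ∈ univ, #{w | R w v} = k := by
    refine (sum_eq_sum_iff_of_le fun v _ => hin v).mp (le_antisymm (sum_le_sum fun v _ => hin v) ?_)
    rw [hswap]
    exact sum_le_sum fun v _ => hout v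
  have := hin_eq v (mem_univ v)
  have := hout v
  have := hdeg v
  omega

namespace SimpleGraph

section StarGraph

variable {W : Type*} {H : SimpleGraph W} {u : W} {p : ℕ}

lemma supp_connectedComponentMk_eq_insert_neighborSet
    (h : ∀ x y, H.Adj u x → H.Adj x y → y = u) :
    (H.connectedComponentMk u).supp = insert u (H.neighborSet u) := by
  ext x
  rw [ConnectedComponent.mem_supp_iff, ConnectedComponent.eq, Set.mem_insert_iff, mem_neighborSet]
  constructor
  · intro hx
    have hux := (reachable_iff_reflTransGen u x).mp hx.symm
    clear hx
    induction hux with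
    | refl => exact Or.inl rfl
    | tail _ hyz ih =>
      rcases ih with rfl | hy
      exacts [Or.inr hyz, Or.inl (h _ _ hy hyz)]
  · rintro (rfl | hx)
    exacts [Reachable.rfl, hx.symm.reachable]

lemma induce_supp_connectedComponentMk_eq_starGraph
    (h : ∀ x y, H.Adj u x → H.Adj x y → y = u) :
    H.induce (H.connectedComponentMk u).supp = starGraph ⟨u, rfl⟩ := by
  ext ⟨x, hx⟩ ⟨y, hy⟩
  simp only [comap_adj, Function.Embedding.subtype_apply, starGraph_adj, ne_eq, Subtype.ext_iff]
  rw [supp_connectedComponentMk_eq_insert_neighborSet h] at hx hy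
  constructor
  · intro hxy
    refine ⟨hxy.ne, ?_⟩
    rcases hx with rfl | hx
    exacts [Or.inl rfl, Or.inr (h _ _ hx hxy)]
  · rintro ⟨hne, rfl | rfl⟩
    · rcases hy with rfl | hy
      exacts [absurd rfl hne, hy]
    · rcases hx with rfl | hx
      exacts [absurd rfl hne, hx.symm]

lemma nonempty_starGraph_iso_completeBipartiteGraph [Finite W] (r : W)
    (hcard : Nat.card W = p + 1) :
    Nonempty (starGraph r ≃g completeBipartiteGraph (Fin 1) (Fin p)) := by
  classical
  have hleaves : Nat.card {x // x ≠ r} = p := by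
    have := Nat.card_congr (Equiv.optionSubtypeNe r)
    rw [Finite.card_option] at this
    omega
  let e : {x // x ≠ r} ≃ Fin p := (Finite.equivFin _).trans (finCongr hleaves)
  let φ : W ≃ Fin 1 ⊕ Fin p :=
    (Equiv.optionSubtypeNe r).symm.trans <| (Equiv.optionCongr e).trans <|
      (Equiv.optionEquivSumPUnit.{0} _).trans <| (Equiv.sumComm _ _).trans <|
        Equiv.sumCongr (Equiv.ofUnique _ _) (Equiv.refl _)
  refine ⟨⟨φ, fun {a b} => ?_⟩⟩
  by_cases ha : a = r <;> by_cases hb : b = r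
  all_goals simp [φ, ha, hb, eq_comm (a := r)]

lemma nonempty_induce_supp_iso_completeBipartiteGraph [Finite W]
    (h : ∀ x y, H.Adj u x → H.Adj x y → y = u) (hdeg : (H.neighborSet u).ncard = p) :
    Nonempty (H.induce (H.connectedComponentMk u).supp ≃g
      completeBipartiteGraph (Fin 1) (Fin p)) := by
  rw [induce_supp_connectedComponentMk_eq_starGraph h]
  refine nonempty_starGraph_iso_completeBipartiteGraph _ ?_
  rw [Nat.card_coe_set_eq, supp_connectedComponentMk_eq_insert_neighborSet h,
    Set.ncard_insert_of_notMem H.notMem_neighborSet_self, hdeg]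

lemma completeBipartiteGraph_eq_or_eq_of_adj_of_adj_of_adj {α β : Type*} [Subsingleton α]
    {a b c d : α ⊕ β}
    (hab : (completeBipartiteGraph α β).Adj a b) (hbc : (completeBipartiteGraph α β).Adj b c)
    (hcd : (completeBipartiteGraph α β).Adj c d) : a = c ∨ b = d := by
  rcases a with a | a <;> rcases b with b | b <;> simp at hab <;>
    rcases c with c | c <;> simp at hbc
  · exact Or.inl (congrArg Sum.inl (Subsingleton.elim a c))
  · rcases d with d | d <;> simp at hcd
    exact Or.inr (congrArg Sum.inl (Subsingleton.elim b d))

lemma eq_or_eq_of_forall_iso_completeBipartiteGraph {α β : Type*} [Subsingleton α]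
    (h : ∀ C : H.ConnectedComponent, Nonempty (H.induce C.supp ≃g completeBipartiteGraph α β))
    {a b c d : W} (hab : H.Adj a b) (hbc : H.Adj b c) (hcd : H.Adj c d) : a = c ∨ b = d := by
  set C := H.connectedComponentMk a
  have ha : a ∈ C.supp := rfl
  have hb := C.mem_supp_of_adj_mem_supp ha hab
  have hc := C.mem_supp_of_adj_mem_supp hb hbc
  have hd := C.mem_supp_of_adj_mem_supp hc hcd
  obtain ⟨φ⟩ := h C
  have hφ {x y : C.supp} (hxy : H.Adj x y) : (completeBipartiteGraph α β).Adj (φ x) (φ y) :=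
    φ.map_adj_iff.mpr hxy
  simpa [φ.injective.eq_iff] using completeBipartiteGraph_eq_or_eq_of_adj_of_adj_of_adj
    (hφ (x := ⟨a, ha⟩) (y := ⟨b, hb⟩) hab) (hφ (x := ⟨b, hb⟩) (y := ⟨c, hc⟩) hbc)
    (hφ (x := ⟨c, hc⟩) (y := ⟨d, hd⟩) hcd)

end StarGraph

section ColorDegree

variable {V α : Type*} [Fintype V] [DecidableEq α] {G : SimpleGraph V} [DecidableRel G.Adj]
  {f : V → α} {p : ℕ}

variable (G f)

def colorDegree (v : V) (c : α) : ℕ := #{w | G.Adj v w ∧ f w = c}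

/-- Under a star colouring, `v` is the centre of the bicoloured star containing the edge `vw`. -/
def IsCenterArc (v w : V) : Prop := G.Adj v w ∧ 2 ≤ G.colorDegree f v (f w)

instance : DecidableRel (G.IsCenterArc f) := fun _ _ => inferInstanceAs (Decidable (_ ∧ _))

variable {G f}

lemma colorDegree_self_eq_zero (hf : IsProperColoring G f) (v : V) :
    G.colorDegree f v (f v) = 0 :=
  card_eq_zero.mpr <| filter_eq_empty_iff.mpr fun _ _ h => hf h.1 h.2.symm

lemma one_le_colorDegree {v w : V} (h : G.Adj v w) : 1 ≤ G.colorDegree f v (f w) :=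
  card_pos.mpr ⟨w, by simp [h]⟩

lemma _root_.IsStarColoring.colorDegree_eq_one_of_isCenterArc (hstar : IsStarColoring G f)
    {v w : V} (h : G.IsCenterArc f v w) : G.colorDegree f w (f v) = 1 := by
  refine le_antisymm ?_ (one_le_colorDegree h.1.symm)
  by_contra! hgt
  obtain ⟨x, hx, hxv⟩ := exists_mem_ne hgt v
  obtain ⟨u, hu, huw⟩ := exists_mem_ne h.2 w
  simp only [mem_filter, mem_univ, true_and] at hx hu
  have hxu : x ≠ u := fun hxu => hstar.1 h.1 (hx.2.symm.trans ((congrArg f hxu).trans hu.2))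
  exact hstar.2 x w v u hx.1.symm h.1.symm hu.1 hxv huw.symm hxu ⟨hx.2, hu.2.symm⟩

lemma _root_.IsStarColoring.disjoint_isCenterArc (hstar : IsStarColoring G f) (v : V) :
    Disjoint ({w | G.IsCenterArc f v w} : Finset V) ({w | G.IsCenterArc f w v} : Finset V) := by
  refine disjoint_filter.mpr fun _ _ h h' => ?_
  have := hstar.colorDegree_eq_one_of_isCenterArc h
  have := h'.2
  omega

lemma _root_.IsStarColoring.nonempty_iso_of_colorDegree_eq (hp : 2 ≤ p)
    (hstar : IsStarColoring G f) {S : Set V} {u : V} {c : α}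
    (hS : ∀ v, v ∈ S ↔ f v = f u ∨ f v = c) (hu : u ∈ S)
    (hdeg : G.colorDegree f u c = p) :
    Nonempty ((G.induce S).induce ((G.induce S).connectedComponentMk ⟨u, hu⟩).supp ≃g
      completeBipartiteGraph (Fin 1) (Fin p)) := by
  have hleaf : ∀ {x : V}, G.Adj u x → x ∈ S → f x = c := fun hux hx =>
    ((hS _).mp hx).resolve_left (hstar.1 hux).symm
  refine nonempty_induce_supp_iso_completeBipartiteGraph (fun x y hux hxy => ?_) ?_
  · replace hux : G.Adj u x := hux
    replace hxy : G.Adj x y := hxy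
    have hxc : f x = c := hleaf hux x.2
    have hone := hstar.colorDegree_eq_one_of_isCenterArc (show G.IsCenterArc f u x from
      ⟨hux, by rw [hxc, hdeg]; exact hp⟩)
    have hyu : f y = f u := ((hS y).mp y.2).resolve_right fun h => hstar.1 hxy (hxc.trans h.symm)
    exact Subtype.ext (card_le_one.mp hone.le _ (by simp [hxy, hyu]) _ (by simp [hux.symm]))
  · rw [neighborSet_induce, ← Set.ncard_image_of_injective _ Subtype.val_injective,
      Subtype.image_preimage_coe, ← hdeg, colorDegree, ← Set.ncard_coe_finset]
    congr 1
    ext w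
    simp only [Set.mem_inter_iff, mem_neighborSet, coe_filter, mem_univ, true_and]
    exact ⟨fun ⟨hw, h⟩ => ⟨h, hleaf h hw⟩, fun ⟨h, hc⟩ => ⟨(hS w).mpr (Or.inr hc), h⟩⟩

lemma isCenterArc_union_subset [DecidableEq V] (v : V) :
    ({w | G.IsCenterArc f v w} : Finset V) ∪ ({w | G.IsCenterArc f w v} : Finset V) ⊆
      G.neighborFinset v := by
  intro w
  simp only [mem_union, mem_filter, mem_univ, true_and, mem_neighborFinset]
  rintro (h | h)
  exacts [h.1, h.1.symm]

variable [Fintype α]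

lemma sum_colorDegree_erase (hreg : G.IsRegularOfDegree (2 * p)) (hf : IsProperColoring G f)
    (v : V) : ∑ c ∈ univ.erase (f v), G.colorDegree f v c = 2 * p := by
  rw [sum_erase _ (colorDegree_self_eq_zero hf v), ← hreg v, ← card_neighborFinset_eq_degree,
    neighborFinset_eq_filter, card_eq_sum_card_fiberwise (f := f) (t := univ) (by simp)]
  simp only [colorDegree, filter_filter]

lemma card_isCenterArc_eq_sum (hf : IsProperColoring G f) (v : V) :
    #{w | G.IsCenterArc f v w} =
      ∑ c ∈ univ.erase (f v) with 2 ≤ G.colorDegree f v c, G.colorDegree f v c := by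
  rw [filter_erase, erase_eq_of_notMem (by simp [colorDegree_self_eq_zero hf]),
    card_eq_sum_card_fiberwise (f := f) (t := {c | 2 ≤ G.colorDegree f v c})
      fun w hw => by simpa using (mem_filter.mp hw).2.2]
  refine sum_congr rfl fun c hc => ?_
  rw [colorDegree, filter_filter]
  refine congrArg card <| filter_congr fun w _ => ?_
  simp only [IsCenterArc, and_assoc]
  exact and_congr_right fun _ => ⟨And.right, fun h => ⟨h ▸ (mem_filter.mp hc).2, h⟩⟩

lemma le_card_isCenterArc (hp : 2 ≤ p) (hα : Fintype.card α = p + 2)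
    (hreg : G.IsRegularOfDegree (2 * p)) (hf : IsProperColoring G f) (v : V) :
    p ≤ #{w | G.IsCenterArc f v w} := by
  rw [card_isCenterArc_eq_sum hf]
  exact le_sum_filter_two_le hp (by simp [hα]) (sum_colorDegree_erase hreg hf v)

lemma colorDegree_eq_one_or_eq_of_card_isCenterArc_le (hp : 2 ≤ p) (hα : Fintype.card α = p + 2)
    (hreg : G.IsRegularOfDegree (2 * p)) (hf : IsProperColoring G f) {v : V}
    (hv : #{w | G.IsCenterArc f v w} ≤ p) {c : α} (hc : c ≠ f v) :
    G.colorDegree f v c = 1 ∨ G.colorDegree f v c = p := by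
  rw [card_isCenterArc_eq_sum hf] at hv
  exact eq_one_or_eq_of_sum_filter_two_le_le hp (by simp [hα]) (sum_colorDegree_erase hreg hf v)
    hv c (mem_erase.mpr ⟨hc, mem_univ c⟩)

variable [DecidableEq V]

lemma _root_.IsStarColoring.card_isCenterArc (hp : 2 ≤ p) (hα : Fintype.card α = p + 2)
    (hreg : G.IsRegularOfDegree (2 * p)) (hstar : IsStarColoring G f) (v : V) :
    #{w | G.IsCenterArc f v w} = p ∧ #{w | G.IsCenterArc f w v} = p := by
  refine card_filter_rel_eq_of_le_of_add_le _ (le_card_isCenterArc hp hα hreg hstar.1)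
    (fun v => ?_) v
  rw [← card_union_of_disjoint (hstar.disjoint_isCenterArc v), ← hreg v,
    ← card_neighborFinset_eq_degree]
  exact card_le_card (isCenterArc_union_subset v)

lemma _root_.IsStarColoring.isCenterArc_or_isCenterArc (hp : 2 ≤ p)
    (hα : Fintype.card α = p + 2) (hreg : G.IsRegularOfDegree (2 * p))
    (hstar : IsStarColoring G f) {v w : V} (hvw : G.Adj v w) :
    G.IsCenterArc f v w ∨ G.IsCenterArc f w v := by
  have hcover :
      ({w | G.IsCenterArc f v w} : Finset V) ∪ ({w | G.IsCenterArc f w v} : Finset V) =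
        G.neighborFinset v := by
    refine eq_of_subset_of_card_le (isCenterArc_union_subset v) ?_
    rw [card_union_of_disjoint (hstar.disjoint_isCenterArc v), card_neighborFinset_eq_degree,
      hreg v, (hstar.card_isCenterArc hp hα hreg v).1, (hstar.card_isCenterArc hp hα hreg v).2,
      two_mul]
  have hw : w ∈ G.neighborFinset v := (mem_neighborFinset G v w).mpr hvw
  rw [← hcover] at hw
  simpa using hw

lemma _root_.IsStarColoring.colorDegree_eq_one_or_eq (hp : 2 ≤ p) (hα : Fintype.card α = p + 2)
    (hreg : G.IsRegularOfDegree (2 * p)) (hstar : IsStarColoring G f) {v : V} {c : α}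
    (hc : c ≠ f v) : G.colorDegree f v c = 1 ∨ G.colorDegree f v c = p :=
  colorDegree_eq_one_or_eq_of_card_isCenterArc_le hp hα hreg hstar.1
    (hstar.card_isCenterArc hp hα hreg v).1.le hc

lemma _root_.IsStarColoring.exists_reachable_colorDegree_eq (hp : 2 ≤ p)
    (hα : Fintype.card α = p + 2) (hreg : G.IsRegularOfDegree (2 * p))
    (hstar : IsStarColoring G f) {S : Set V} {x : V} {c : α} (hc : c ≠ f x)
    (hS : ∀ v, v ∈ S ↔ f v = f x ∨ f v = c) (hx : x ∈ S) :
    ∃ u c', ∃ hu : u ∈ S, (∀ v, v ∈ S ↔ f v = f u ∨ f v = c') ∧ G.colorDegree f u c' = p ∧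
      (G.induce S).Reachable ⟨x, hx⟩ ⟨u, hu⟩ := by
  rcases hstar.colorDegree_eq_one_or_eq hp hα hreg hc with h1 | hpdeg
  · -- `x` is a leaf; the centre is its unique neighbour of colour `c`
    obtain ⟨w, hw⟩ := card_pos.mp (h1 ▸ Nat.one_pos : 0 < G.colorDegree f x c)
    simp only [mem_filter, mem_univ, true_and] at hw
    have hwS : w ∈ S := (hS w).mpr (Or.inr hw.2)
    have hcenter : G.IsCenterArc f w x :=
      (hstar.isCenterArc_or_isCenterArc hp hα hreg hw.1).resolve_left fun h => by
        have := h.2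
        rw [hw.2] at this
        omega
    refine ⟨w, f x, hwS, fun v => by rw [hS, hw.2, or_comm], ?_,
      (show (G.induce S).Adj ⟨x, hx⟩ ⟨w, hwS⟩ from hw.1).reachable⟩
    have htwo := hcenter.2
    have hone_or := hstar.colorDegree_eq_one_or_eq hp hα hreg (hstar.1 hw.1)
    omega
  · exact ⟨x, c, hx, hS, hpdeg, Reachable.rfl⟩

lemma _root_.IsStarColoring.nonempty_induce_supp_iso (hp : 2 ≤ p) (hα : Fintype.card α = p + 2)
    (hreg : G.IsRegularOfDegree (2 * p)) (hstar : IsStarColoring G f) {i j : α} (hij : i ≠ j)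
    (C : (G.induce {v | f v = i ∨ f v = j}).ConnectedComponent) :
    Nonempty ((G.induce {v | f v = i ∨ f v = j}).induce C.supp ≃g
      completeBipartiteGraph (Fin 1) (Fin p)) := by
  induction C using ConnectedComponent.ind with | h x => ?_
  obtain ⟨c, hc, hS⟩ : ∃ c, c ≠ f x ∧ ∀ v, v ∈ {v | f v = i ∨ f v = j} ↔ f v = f x ∨ f v = c := by
    rcases x.2 with h | h
    · exact ⟨j, by rw [h]; exact hij.symm, fun v => by simp [h]⟩
    · exact ⟨i, by rw [h]; exact hij, fun v => by simp [h, or_comm]⟩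
  obtain ⟨u, c', hu, hS', hdeg, hxu⟩ := hstar.exists_reachable_colorDegree_eq hp hα hreg hc hS x.2
  rw [ConnectedComponent.sound hxu]
  exact hstar.nonempty_iso_of_colorDegree_eq hp hS' hu hdeg

end ColorDegree

end SimpleGraph

theorem stmt9_general {V : Type*} [Fintype V] (p : ℕ) (hp : 2 ≤ p)
    (G : SimpleGraph V) [DecidableRel G.Adj] (hreg : G.IsRegularOfDegree (2 * p))
    (f : V → Fin (p + 2))
    (hf : IsProperColoring G f) :
    IsStarColoring G f ↔
      ∀ i j : Fin (p + 2), i ≠ j →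
        ∀ C : (G.induce {v | f v = i ∨ f v = j}).ConnectedComponent,
          Nonempty ((G.induce {v | f v = i ∨ f v = j}).induce C.supp ≃g
            completeBipartiteGraph (Fin 1) (Fin p)) := by
  classical
  refine ⟨fun hstar i j hij => hstar.nonempty_induce_supp_iso hp (Fintype.card_fin _) hreg hij,
    fun h => ⟨hf, ?_⟩⟩
  rintro a b c d hab hbc hcd hac hbd - ⟨hac', hbd'⟩
  rcases eq_or_eq_of_forall_iso_completeBipartiteGraph (h (f a) (f b) (hf hab))
    (a := ⟨a, Or.inl rfl⟩) (b := ⟨b, Or.inr rfl⟩) (c := ⟨c, Or.inl hac'.symm⟩)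
    (d := ⟨d, Or.inr hbd'.symm⟩) hab hbc hcd with h | h
  exacts [hac (congrArg Subtype.val h), hbd (congrArg Subtype.val h)]

theorem stmt9 {V : Type*} [Fintype V] (p : ℕ) (hp : 2 ≤ p)
    (G : SimpleGraph V) [DecidableRel G.Adj] (hreg : G.IsRegularOfDegree (2 * p))
    (A : V → V → Prop) (f : V → Fin (p + 2))
    (hA : IsOrientation G A) (hf : IsProperColoring G f) :
    IsStarColoring G f ↔
      ∀ i j : Fin (p + 2), i ≠ j →
        ∀ C : (G.induce {v | f v = i ∨ f v = j}).ConnectedComponent,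
          Nonempty ((G.induce {v | f v = i ∨ f v = j}).induce C.supp ≃g
            completeBipartiteGraph (Fin 1) (Fin p)) :=
  stmt9_general p hp G hreg f hf
end

section
/- Let p ≥ 2 and let G be a 2p-regular graph with a proper (p+2)-star colouring f. Then the orientation G⃗ of G obtained by orienting the edges of each bicoloured component (a star K_{1,p}) towards its centre is an Eulerian orientation: every vertex has in-degree p and out-degree p. -/
open SimpleGraph

theorem stmt10 {V : Type*} [Fintype V] (p : ℕ) (hp : 2 ≤ p)
    (G : SimpleGraph V) [DecidableRel G.Adj] (hreg : G.IsRegularOfDegree (2 * p))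
    (f : V → Fin (p + 2)) (hf : IsStarColoring G f)
    (A : V → V → Prop) (hA : IsOrientation G A)
    (hmid : ∀ a b c, G.Adj a b → G.Adj b c → a ≠ c → f a = f c → A a b) :
    ∀ v : V, Nat.card {u | A u v} = p ∧ Nat.card {u | A v u} = p := by
  classical
  obtain ⟨hA1, hA2⟩ := hA
  obtain ⟨hprop, _⟩ := hf
  set In : V → Finset V := fun v => Finset.univ.filter (fun u => A u v) with hIn
  set Out : V → Finset V := fun v => Finset.univ.filter (fun u => A v u) with hOut
  -- in-degree + out-degree = 2p
  have hsplit : ∀ v, (In v).card + (Out v).card = 2 * p := by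
    intro v
    have hunion : In v ∪ Out v = G.neighborFinset v := by
      ext u
      simp only [hIn, hOut, Finset.mem_union, Finset.mem_filter, Finset.mem_univ, true_and,
        mem_neighborFinset]
      constructor
      · rintro (h | h)
        · exact ((hA1 u v).2 (Or.inl h)).symm
        · exact (hA1 v u).2 (Or.inl h)
      · intro h
        rcases (hA1 u v).1 h.symm with h' | h'
        · exact Or.inl h'
        · exact Or.inr h'
    have hdisj : Disjoint (In v) (Out v) := by
      rw [Finset.disjoint_left]
      intro u hu1 hu2
      simp only [hIn, hOut, Finset.mem_filter, Finset.mem_univ, true_and] at hu1 hu2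
      exact hA2 u v hu1 hu2
    have := Finset.card_union_of_disjoint hdisj
    rw [hunion] at this
    rw [← this, G.card_neighborFinset_eq_degree, hreg v]
  -- in-degree ≥ p
  have hin_ge : ∀ v, p ≤ (In v).card := by
    intro v
    set N := G.neighborFinset v with hN
    set R := N.filter (fun u => ∃ w ∈ N, w ≠ u ∧ f w = f u) with hR
    have hRIn : R ⊆ In v := by
      intro u hu
      rw [hR, Finset.mem_filter] at hu
      obtain ⟨huN, w, hwN, hwu, hfw⟩ := hu
      have h1 : G.Adj u v := ((G.mem_neighborFinset v u).1 huN).symm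
      have h2 : G.Adj v w := (G.mem_neighborFinset v w).1 hwN
      have huw : u ≠ w := fun h => hwu h.symm
      have : A u v := hmid u v w h1 h2 huw hfw.symm
      simp [hIn, this]
    have hNcard : N.card = 2 * p := by rw [hN, G.card_neighborFinset_eq_degree, hreg v]
    -- the unique-colour neighbours
    have hUinj : Set.InjOn f ↑(N \ R) := by
      intro u1 h1 u2 h2 hfe
      by_contra hne
      rw [Finset.coe_sdiff, Set.mem_diff] at h1 h2
      obtain ⟨h1N, h1R⟩ := h1
      exact h1R (by
        rw [Finset.mem_coe, hR, Finset.mem_filter]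
        exact ⟨by exact_mod_cast h1N, u2, by exact_mod_cast h2.1, fun h => hne h.symm, hfe.symm⟩)
    have hUmap : ∀ u ∈ N \ R, f u ∈ (Finset.univ : Finset (Fin (p + 2))).erase (f v) := by
      intro u hu
      have huN : u ∈ N := (Finset.mem_sdiff.1 hu).1
      have : G.Adj v u := (G.mem_neighborFinset v u).1 huN
      exact Finset.mem_erase.2 ⟨fun h => hprop this h.symm, Finset.mem_univ _⟩
    have hUle : (N \ R).card ≤ p + 1 := by
      have := Finset.card_le_card_of_injOn f hUmap hUinj
      simpa using this
    have hUle' : (N \ R).card ≤ p := by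
      by_contra hgt
      push_neg at hgt
      have hUeq : (N \ R).card = p + 1 := le_antisymm hUle hgt
      have hcards : (N \ R).card + R.card = N.card :=
        Finset.card_sdiff_add_card_eq_card (Finset.filter_subset _ N)
      have hRpos : 0 < R.card := by omega
      obtain ⟨u, huR⟩ := Finset.card_pos.1 hRpos
      have huN : u ∈ N := Finset.mem_of_mem_filter u huR
      have hfu : f u ∈ (Finset.univ : Finset (Fin (p + 2))).erase (f v) := by
        have : G.Adj v u := (G.mem_neighborFinset v u).1 huN
        exact Finset.mem_erase.2 ⟨fun h => hprop this h.symm, Finset.mem_univ _⟩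
      have hsurj := Finset.surj_on_of_inj_on_of_card_le (fun a _ => f a)
        (fun a ha => hUmap a ha) (fun a₁ a₂ h₁ h₂ he => hUinj (by exact_mod_cast h₁) (by exact_mod_cast h₂) he)
        (by simp [hUeq])
      obtain ⟨u', hu'U, hfu'⟩ := hsurj (f u) hfu
      have hu'R : u' ∉ R := (Finset.mem_sdiff.1 hu'U).2
      have hne : u ≠ u' := by
        intro h
        exact hu'R (h ▸ huR)
      apply hu'R
      rw [hR, Finset.mem_filter]
      exact ⟨(Finset.mem_sdiff.1 hu'U).1, u, huN, hne, hfu'⟩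
    have hcards : (N \ R).card + R.card = N.card :=
      Finset.card_sdiff_add_card_eq_card (Finset.filter_subset _ N)
    have : p ≤ R.card := by omega
    exact this.trans (Finset.card_le_card hRIn)
  -- total in = total out
  have hsum : ∑ v : V, (In v).card = ∑ v : V, (Out v).card := by
    simp only [hIn, hOut, Finset.card_filter]
    exact Finset.sum_comm
  -- total in = p * |V|
  have htot : ∑ v : V, (In v).card = p * Fintype.card V := by
    have h2 : ∑ v : V, ((In v).card + (Out v).card) = 2 * p * Fintype.card V := by
      simp [hsplit, mul_comm]
    rw [Finset.sum_add_distrib, ← hsum] at h2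
    have h3 : (∑ v : V, (In v).card) + (∑ v : V, (In v).card) = 2 * (p * Fintype.card V) := by
      rw [h2]; ring
    omega
  -- each in-degree = p
  have hin_eq : ∀ v, (In v).card = p := by
    intro v
    by_contra hne
    have hlt : p < (In v).card := lt_of_le_of_ne (hin_ge v) (Ne.symm hne)
    have : ∑ _v : V, p < ∑ v : V, (In v).card :=
      Finset.sum_lt_sum (fun i _ => hin_ge i) ⟨v, Finset.mem_univ v, hlt⟩
    rw [htot, Finset.sum_const, Finset.card_univ, smul_eq_mul, mul_comm] at this
    exact lt_irrefl _ this
  intro v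
  have hcard1 : Nat.card {u | A u v} = (In v).card := by
    rw [Nat.card_eq_fintype_card]
    simp [hIn, Fintype.card_subtype, Set.mem_setOf_eq]
  have hcard2 : Nat.card {u | A v u} = (Out v).card := by
    rw [Nat.card_eq_fintype_card]
    simp [hOut, Fintype.card_subtype, Set.mem_setOf_eq]
  have h1 := hin_eq v
  have h2 := hsplit v
  exact ⟨by rw [hcard1, h1], by rw [hcard2]; omega⟩
end

section
/- Let p ≥ 2 and let G be a 2p-regular graph. Then G admits a (p+2)-star colouring if and only if G has an orientation G⃗ admitting an out-neighbourhood bijective homomorphism to L⃗(K_{p+2}). -/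
open SimpleGraph

/-- Out-neighbourhood bijective homomorphism between oriented graphs given by
their arc relations. -/
def IsOBH {V W : Type*} (A : V → V → Prop) (B : W → W → Prop) (psi : V → W) : Prop :=
  (∀ ⦃u v⦄, A u v → B (psi u) (psi v)) ∧
    ∀ v, Set.BijOn psi {x | A v x} {y | B (psi v) y}

/-- Vertex set of the oriented line graph of the complete graph `K_q` on `ZMod q`. -/
def LKV (q : ℕ) : Type := {x : ZMod q × ZMod q // x.1 ≠ x.2}

/-- Arc relation of the oriented line graph `L⃗(K_q)`: an arc from `(i,j)` to `(j,k)`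
whenever `k ∉ {i, j}`. -/
def LKArc (q : ℕ) (a b : LKV q) : Prop := a.1.2 = b.1.1 ∧ a.1.1 ≠ b.1.2

/-- The underlying undirected graph `L*(K_q)` of `L⃗(K_q)`. -/
def LstarK (q : ℕ) : SimpleGraph (LKV q) := SimpleGraph.fromRel (LKArc q)

open Finset in
theorem forward_aux {V α : Type*} [Fintype V] [Fintype α] [DecidableEq V] [DecidableEq α]
    {p : ℕ} (hp : 2 ≤ p) (hα : Fintype.card α = p + 2)
    (G : SimpleGraph V) [DecidableRel G.Adj] (hreg : G.IsRegularOfDegree (2 * p))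
    (f : V → α) (hf : IsStarColoring G f) :
    ∃ (A : V → V → Prop) (psi : V → {x : α × α // x.1 ≠ x.2}),
      IsOrientation G A ∧
        IsOBH A (fun a b => a.1.2 = b.1.1 ∧ a.1.1 ≠ b.1.2) psi := by
  classical
  obtain ⟨hprop, hstar⟩ := hf
  set N : V → Finset V := fun v => G.neighborFinset v with hN
  set nc : α → V → ℕ := fun j v => ((N v).filter fun u => f u = j).card with hnc
  have hmemN : ∀ v u, u ∈ N v ↔ G.Adj v u := fun v u => G.mem_neighborFinset v u
  have hcardN : ∀ v, (N v).card = 2 * p := fun v => hreg v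
  have hnc_self : ∀ v, nc (f v) v = 0 := by
    intro v
    simp only [hnc, Finset.card_eq_zero]
    ext u
    simp only [Finset.mem_filter, Finset.notMem_empty, iff_false, not_and, hmemN]
    intro hadj
    exact (hprop hadj).symm
  have hnc_pos : ∀ {v u}, G.Adj v u → 1 ≤ nc (f u) v := by
    intro v u hadj
    have hu : u ∈ (N v).filter (fun w => f w = f u) :=
      Finset.mem_filter.mpr ⟨(hmemN v u).mpr hadj, rfl⟩
    exact Finset.card_pos.mpr ⟨u, hu⟩
  have hpair : ∀ {v j u u'}, u ∈ (N v).filter (fun w => f w = j) →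
      u' ∈ (N v).filter (fun w => f w = j) → u ≠ u' → 2 ≤ nc j v := by
    intro v j u u' hu hu' hne
    exact Finset.one_lt_card_iff.mpr ⟨u, u', hu, hu', hne⟩
  -- key consequence of the star property
  have key : ∀ {v u}, G.Adj v u → 2 ≤ nc (f u) v →
      ∀ {x}, G.Adj u x → f x = f v → x = v := by
    intro v u hvu h2 x hux hfx
    by_cases hxv : x = v
    · exact hxv
    exfalso
    obtain ⟨w, hw, hwne⟩ : ∃ w ∈ (N v).filter (fun z => f z = f u), w ≠ u := by
      obtain ⟨a, b, ha, hb, hab⟩ := Finset.one_lt_card_iff.mp h2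
      by_cases hau : a = u
      · exact ⟨b, hb, by rw [hau] at hab; exact fun h => hab h.symm⟩
      · exact ⟨a, ha, hau⟩
    have hwadj : G.Adj v w := (hmemN v w).mp (Finset.mem_filter.mp hw).1
    have hwcol : f w = f u := (Finset.mem_filter.mp hw).2
    have hwx : w ≠ x := by
      intro he
      rw [← he] at hfx
      exact hprop hvu (hfx.symm.trans hwcol)
    exact hstar w v u x hwadj.symm hvu hux hwne (fun h => hxv h.symm) hwx
      ⟨hwcol, hfx.symm⟩
  have key2 : ∀ {v u}, G.Adj v u → 2 ≤ nc (f u) v → nc (f v) u = 1 := by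
    intro v u hvu h2
    have hset : (N u).filter (fun x => f x = f v) = {v} := by
      apply Finset.eq_singleton_iff_unique_mem.mpr
      refine ⟨Finset.mem_filter.mpr ⟨(hmemN u v).mpr hvu.symm, rfl⟩, ?_⟩
      intro x hx
      obtain ⟨hx1, hx2⟩ := Finset.mem_filter.mp hx
      exact key hvu h2 ((hmemN u x).mp hx1) hx2
    simp only [hnc, hset, Finset.card_singleton]
  have hsum : ∀ v, ∑ j : α, nc j v = 2 * p := by
    intro v
    rw [← hcardN v]
    exact (Finset.card_eq_sum_card_fiberwise (fun x _ => Finset.mem_univ (f x))).symm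
  have hrep : ∀ v, ∃ j, 2 ≤ nc j v := by
    intro v
    by_contra h
    push_neg at h
    have h1 : nc (f v) v + ∑ j ∈ Finset.univ.erase (f v), nc j v = ∑ j : α, nc j v :=
      Finset.add_sum_erase Finset.univ (fun j => nc j v) (Finset.mem_univ (f v))
    have h2 : ∑ j ∈ Finset.univ.erase (f v), nc j v ≤ (Finset.univ.erase (f v)).card * 1 := by
      apply Finset.sum_le_card_nsmul
      intro j _
      exact Nat.lt_succ_iff.mp (h j)
    rw [Finset.card_erase_of_mem (Finset.mem_univ _), Finset.card_univ, hα] at h2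
    rw [hnc_self, zero_add, hsum] at h1
    omega
  set g : V → α := fun v => Classical.choose (hrep v) with hgdef
  have hg : ∀ v, 2 ≤ nc (g v) v := fun v => Classical.choose_spec (hrep v)
  have hgf : ∀ v, g v ≠ f v := by
    intro v he
    have := hg v
    rw [he, hnc_self] at this
    omega
  -- D v : neighbours whose colour appears exactly once
  set D : V → Finset V := fun v => (N v).filter (fun u => nc (f u) v = 1) with hD
  set indeg : V → ℕ := fun v => ((N v).filter (fun u => 2 ≤ nc (f u) v)).card with hindeg
  set outdeg : V → ℕ := fun v => ((N v).filter (fun u => 2 ≤ nc (f v) u)).card with houtdeg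
  have hsplit : ∀ v, indeg v + (D v).card = 2 * p := by
    intro v
    rw [← hcardN v]
    have hto := Finset.card_filter_add_card_filter_not
      (s := N v) (p := fun u => 2 ≤ nc (f u) v)
    have hDeq : (N v).filter (fun a => ¬ 2 ≤ nc (f a) v) = D v := by
      apply Finset.filter_congr
      intro u hu
      have h1 := hnc_pos ((hmemN v u).mp hu)
      simp only [not_le]
      omega
    rw [← hto, hDeq]
  have hDcard_le : ∀ v, (D v).card ≤ p := by
    intro v
    have hinj : Set.InjOn f (D v) := by
      intro u hu u' hu' he
      by_contra hne
      obtain ⟨hu1, hu2⟩ := Finset.mem_filter.mp hu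
      obtain ⟨hu1', hu2'⟩ := Finset.mem_filter.mp hu'
      have h2 : 2 ≤ nc (f u) v := hpair (Finset.mem_filter.mpr ⟨hu1, rfl⟩)
        (Finset.mem_filter.mpr ⟨hu1', he.symm⟩) hne
      omega
    have hmap : ∀ u ∈ D v, f u ∈ Finset.univ \ {f v, g v} := by
      intro u hu
      obtain ⟨hu1, hu2⟩ := Finset.mem_filter.mp hu
      have hadj := (hmemN v u).mp hu1
      simp only [Finset.mem_sdiff, Finset.mem_univ, true_and, Finset.mem_insert,
        Finset.mem_singleton, not_or]
      refine ⟨fun he => hprop hadj (he.symm), fun he => ?_⟩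
      have := hg v
      rw [← he] at this
      omega
    have hcard2 : (Finset.univ \ ({f v, g v} : Finset α)).card = p := by
      rw [Finset.card_sdiff_of_subset (Finset.subset_univ _), Finset.card_univ, hα]
      rw [Finset.card_insert_of_notMem (by simp [(hgf v).symm] : f v ∉ ({g v} : Finset α)),
        Finset.card_singleton]
      omega
    calc (D v).card ≤ (Finset.univ \ ({f v, g v} : Finset α)).card :=
          Finset.card_le_card_of_injOn f hmap hinj
      _ = p := hcard2
  have h_in_ge : ∀ v, p ≤ indeg v := by
    intro v
    have := hsplit v
    have := hDcard_le v
    omega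
  have h_out_sub : ∀ v, (N v).filter (fun u => 2 ≤ nc (f v) u) ⊆ D v := by
    intro v u hu
    obtain ⟨hu1, hu2⟩ := Finset.mem_filter.mp hu
    have hadj := (hmemN v u).mp hu1
    exact Finset.mem_filter.mpr ⟨hu1, key2 hadj.symm hu2⟩
  have h_out_le : ∀ v, outdeg v ≤ p := by
    intro v
    exact le_trans (Finset.card_le_card (h_out_sub v)) (hDcard_le v)
  -- double counting
  have hsum_eq : ∑ v : V, indeg v = ∑ v : V, outdeg v := by
    have hform : ∀ v, indeg v =
        ∑ u : V, if G.Adj u v ∧ 2 ≤ nc (f u) v then 1 else 0 := by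
      intro v
      show ((N v).filter (fun u => 2 ≤ nc (f u) v)).card = _
      rw [show (N v).filter (fun u => 2 ≤ nc (f u) v)
          = Finset.univ.filter (fun u => G.Adj u v ∧ 2 ≤ nc (f u) v) by
        ext u; simp only [Finset.mem_filter, Finset.mem_univ, true_and, hmemN,
          G.adj_comm]]
      rw [Finset.card_filter]
    have hform' : ∀ v, outdeg v =
        ∑ u : V, if G.Adj v u ∧ 2 ≤ nc (f v) u then 1 else 0 := by
      intro v
      show ((N v).filter (fun u => 2 ≤ nc (f v) u)).card = _
      rw [show (N v).filter (fun u => 2 ≤ nc (f v) u)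
          = Finset.univ.filter (fun u => G.Adj v u ∧ 2 ≤ nc (f v) u) by
        ext u; simp only [Finset.mem_filter, Finset.mem_univ, true_and, hmemN]]
      rw [Finset.card_filter]
    simp only [hform, hform']
    exact Finset.sum_comm
  -- equalisation
  have e1 : ∑ v : V, outdeg v ≤ ∑ v : V, p := Finset.sum_le_sum (fun v _ => h_out_le v)
  have e2 : ∑ v : V, p ≤ ∑ v : V, indeg v := Finset.sum_le_sum (fun v _ => h_in_ge v)
  have e3 : ∑ v : V, indeg v = ∑ v : V, p := le_antisymm (hsum_eq ▸ e1) e2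
  have e4 : ∑ v : V, outdeg v = ∑ v : V, p := hsum_eq ▸ e3
  have h_in_eq : ∀ v, indeg v = p := by
    intro v
    have := (Finset.sum_eq_sum_iff_of_le (fun v _ => h_in_ge v)).mp e3.symm v (Finset.mem_univ v)
    omega
  have h_out_eq : ∀ v, outdeg v = p := by
    intro v
    exact ((Finset.sum_eq_sum_iff_of_le (fun v _ => h_out_le v)).mp e4 v (Finset.mem_univ v))
  -- structure at each vertex
  have hout_eq_D : ∀ v, (N v).filter (fun u => 2 ≤ nc (f v) u) = D v := by
    intro v
    apply Finset.eq_of_subset_of_card_le (h_out_sub v)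
    have h1 := hsplit v
    have h2 := h_in_eq v
    have h3 := h_out_eq v
    have h4 : ((N v).filter fun u => 2 ≤ nc (f v) u).card = outdeg v := rfl
    omega
  have hDcard : ∀ v, (D v).card = p := by
    intro v
    have h1 := hsplit v
    have h2 := h_in_eq v
    omega
  have himage : ∀ v, (D v).image f = Finset.univ \ ({f v, g v} : Finset α) := by
    intro v
    apply Finset.eq_of_subset_of_card_le
    · intro j hj
      obtain ⟨u, hu, rfl⟩ := Finset.mem_image.mp hj
      obtain ⟨hu1, hu2⟩ := Finset.mem_filter.mp hu
      have hadj := (hmemN v u).mp hu1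
      simp only [Finset.mem_sdiff, Finset.mem_univ, true_and, Finset.mem_insert,
        Finset.mem_singleton, not_or]
      refine ⟨fun he => hprop hadj he.symm, fun he => ?_⟩
      have := hg v
      rw [← he] at this
      omega
    · have hinj : Set.InjOn f (D v) := by
        intro u hu u' hu' he
        by_contra hne
        obtain ⟨hu1, _⟩ := Finset.mem_filter.mp hu
        obtain ⟨hu1', _⟩ := Finset.mem_filter.mp hu'
        have h2 : 2 ≤ nc (f u) v := hpair (Finset.mem_filter.mpr ⟨hu1, rfl⟩)
          (Finset.mem_filter.mpr ⟨hu1', he.symm⟩) hne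
        have := (Finset.mem_filter.mp hu).2
        omega
      rw [Finset.card_image_of_injOn hinj, hDcard v]
      rw [Finset.card_sdiff_of_subset (Finset.subset_univ _), Finset.card_univ, hα]
      rw [Finset.card_insert_of_notMem (by simp [(hgf v).symm] : f v ∉ ({g v} : Finset α)),
        Finset.card_singleton]
      omega
  have huniq : ∀ v j, 2 ≤ nc j v → j = g v := by
    intro v j h2
    by_contra hne
    have hjf : j ≠ f v := by
      intro he
      rw [he, hnc_self] at h2
      omega
    have hjmem : j ∈ (D v).image f := by
      rw [himage v]
      simp [hjf, hne]
    obtain ⟨u, hu, hfu⟩ := Finset.mem_image.mp hjmem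
    have := (Finset.mem_filter.mp hu).2
    rw [hfu] at this
    omega
  have hsurj : ∀ v j, j ≠ f v → j ≠ g v → ∃ u, G.Adj v u ∧ f u = j ∧ f v = g u := by
    intro v j hjf hjg
    have hjmem : j ∈ ((N v).filter (fun u => 2 ≤ nc (f v) u)).image f := by
      rw [hout_eq_D v, himage v]
      simp [hjf, hjg]
    obtain ⟨u, hu, hfu⟩ := Finset.mem_image.mp hjmem
    obtain ⟨hu1, hu2⟩ := Finset.mem_filter.mp hu
    exact ⟨u, (hmemN v u).mp hu1, hfu, huniq u (f v) hu2⟩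
  -- arcs and psi
  set A : V → V → Prop := fun u v => G.Adj u v ∧ f u = g v with hA
  set psi : V → {x : α × α // x.1 ≠ x.2} :=
    fun v => ⟨(g v, f v), fun h => hgf v h⟩ with hpsi
  have harc_basic : ∀ {u v}, A u v → 2 ≤ nc (f u) v := by
    intro u v ⟨hadj, hcol⟩
    rw [hcol]
    exact hg v
  have harc_out : ∀ {u v}, A u v → nc (f v) u = 1 := by
    intro u v hA'
    exact key2 hA'.1.symm (harc_basic hA')
  refine ⟨A, psi, ⟨⟨?_, ?_⟩, ?_, ?_⟩⟩
  · -- orientation : total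
    intro u v
    constructor
    · intro hadj
      by_cases hc : f u = g v
      · exact Or.inl ⟨hadj, hc⟩
      · right
        refine ⟨hadj.symm, ?_⟩
        have h1 : nc (f u) v = 1 := by
          have hpos := hnc_pos hadj.symm
          by_contra hne
          exact hc (huniq v (f u) (by omega))
        have hu : u ∈ (N v).filter (fun w => 2 ≤ nc (f v) w) := by
          rw [hout_eq_D v]
          exact Finset.mem_filter.mpr ⟨(hmemN v u).mpr hadj.symm, h1⟩
        exact huniq u (f v) (Finset.mem_filter.mp hu).2
    · rintro (⟨hadj, _⟩ | ⟨hadj, _⟩)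
      · exact hadj
      · exact hadj.symm
  · -- orientation : antisymmetric
    rintro u v hAuv hAvu
    have h1 := harc_out hAuv
    have h2 := harc_basic hAvu
    omega
  · -- OBH : arcs to arcs
    intro u v hAuv
    refine ⟨hAuv.2, ?_⟩
    intro he
    have he' : g u = f v := he
    have h1 := harc_out hAuv
    have h2 := hg u
    rw [← he'] at h1
    omega
  · -- OBH : bijective on out-neighbourhoods
    intro v
    refine ⟨?_, ?_, ?_⟩
    · intro x hx
      obtain ⟨hadj, hcol⟩ := hx
      refine ⟨hcol, ?_⟩
      intro he
      have he' : g v = f x := he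
      have h1 := harc_out (show A v x from ⟨hadj, hcol⟩)
      have h2 := hg v
      rw [he'] at h2
      omega
    · intro x hx x' hx' he
      obtain ⟨hadj, hcol⟩ := hx
      obtain ⟨hadj', hcol'⟩ := hx'
      have hfe : f x = f x' := congrArg (fun y => y.1.2) he
      by_contra hne
      have h2 : 2 ≤ nc (f x) v := hpair
        (Finset.mem_filter.mpr ⟨(hmemN v x).mpr hadj, rfl⟩)
        (Finset.mem_filter.mpr ⟨(hmemN v x').mpr hadj', hfe.symm⟩) hne
      have h1 := harc_out (show A v x from ⟨hadj, hcol⟩)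
      omega
    · intro y hy
      obtain ⟨hy1, hy2⟩ := hy
      -- hy1 : (psi v).1.2 = y.1.1  i.e.  f v = y.1.1
      -- hy2 : (psi v).1.1 ≠ y.1.2  i.e.  g v ≠ y.1.2
      have hjf : y.1.2 ≠ f v := by
        intro he
        exact y.2 (hy1.symm.trans he.symm)
      obtain ⟨u, hadj, hfu, hgu⟩ := hsurj v y.1.2 hjf (fun he => hy2 he.symm)
      refine ⟨u, ⟨hadj, hgu⟩, ?_⟩
      apply Subtype.ext
      apply Prod.ext
      · exact (hgu.symm.trans hy1)
      · exact hfu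

theorem backward_aux {V : Type*} (q : ℕ) (G : SimpleGraph V) (A : V → V → Prop)
    (psi : V → LKV q) (hA : IsOrientation G A) (h : IsOBH A (LKArc q) psi) :
    IsStarColoring G (fun v => (psi v).1.2) := by
  obtain ⟨horient, _hasym⟩ := hA
  obtain ⟨harc, hbij⟩ := h
  have hproper : ∀ ⦃u v⦄, G.Adj u v → (psi u).1.2 ≠ (psi v).1.2 := by
    intro u v huv
    rcases (horient u v).1 huv with h | h
    · obtain ⟨h1, _⟩ := harc h
      intro he
      exact (psi v).2 (h1.symm.trans he)
    · obtain ⟨h1, _⟩ := harc h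
      intro he
      exact (psi u).2 (h1.symm.trans he.symm)
  -- main auxiliary: if A b c holds on a bicoloured P4 a-b-c-d, contradiction
  have key : ∀ a b c d, G.Adj a b → G.Adj b c → G.Adj c d →
      a ≠ c → b ≠ d → A b c →
      (psi a).1.2 = (psi c).1.2 → (psi b).1.2 = (psi d).1.2 → False := by
    intro a b c d hab hbc hcd hac hbd hAbc h1 h2
    obtain ⟨hbc1, hbc2⟩ := harc hAbc
    -- hbc1 : (psi b).1.2 = (psi c).1.1 ; hbc2 : (psi b).1.1 ≠ (psi c).1.2
    rcases (horient c d).1 hcd with hcd' | hcd'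
    · obtain ⟨hcd1, hcd2⟩ := harc hcd'
      -- hcd2 : (psi c).1.1 ≠ (psi d).1.2
      exact hcd2 (hbc1.symm.trans h2)
    · obtain ⟨hdc1, _⟩ := harc hcd'
      -- hdc1 : (psi d).1.2 = (psi c).1.1
      rcases (horient a b).1 hab with hab' | hab'
      · obtain ⟨hab1, _⟩ := harc hab'
        -- hab1 : (psi a).1.2 = (psi b).1.1
        exact hbc2 (hab1.symm.trans h1)
      · obtain ⟨hba1, _⟩ := harc hab'
        -- hba1 : (psi b).1.2 = (psi a).1.1
        have hinj := (hbij b).2.1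
        have ha : a ∈ {x | A b x} := hab'
        have hc : c ∈ {x | A b x} := hAbc
        have : psi a = psi c := by
          apply Subtype.ext
          apply Prod.ext
          · exact (hba1.symm.trans hbc1).symm ▸ rfl
          · exact h1
        exact hac (hinj ha hc this)
  refine ⟨hproper, ?_⟩
  intro a b c d hab hbc hcd hac hbd had hcontra
  obtain ⟨h1, h2⟩ := hcontra
  rcases (horient b c).1 hbc with hbc' | hbc'
  · exact key a b c d hab hbc hcd hac hbd hbc' h1 h2
  · exact key d c b a hcd.symm hbc.symm hab.symm hbd.symm hac.symm hbc' h2.symm h1.symm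

theorem stmt11 {V : Type*} [Fintype V] (p : ℕ) (hp : 2 ≤ p)
    (G : SimpleGraph V) [DecidableRel G.Adj] (hreg : G.IsRegularOfDegree (2 * p)) :
    (∃ f : V → Fin (p + 2), IsStarColoring G f) ↔
      ∃ (A : V → V → Prop) (psi : V → LKV (p + 2)),
        IsOrientation G A ∧ IsOBH A (LKArc (p + 2)) psi := by
  constructor
  · rintro ⟨f, hf⟩
    classical
    have hcard : Fintype.card (ZMod (p + 2)) = p + 2 := ZMod.card _
    obtain ⟨A, psi, h1, h2⟩ :=
      forward_aux hp hcard G hreg (show V → ZMod (p + 2) from f) hf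
    exact ⟨A, psi, h1, h2⟩
  · rintro ⟨A, psi, h1, h2⟩
    exact ⟨fun v => (psi v).1.2, backward_aux (p + 2) G A psi h1 h2⟩
end

section
/- Let G⃗ be an oriented graph admitting an out-neighbourhood bijective homomorphism ψ to a strongly connected oriented graph H⃗ with |V(G⃗)| = |V(H⃗)|. Then ψ is an isomorphism of oriented graphs from G⃗ to H⃗. -/
open SimpleGraph

theorem stmt13 {V W : Type*} [Fintype V] [Fintype W]
    (A : V → V → Prop) (B : W → W → Prop)
    (hA : ∀ u v, A u v → ¬ A v u) (hB : ∀ u v, B u v → ¬ B v u)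
    (hsc : ∀ u v : W, Relation.ReflTransGen B u v)
    (hcard : Fintype.card V = Fintype.card W)
    (psi : V → W) (hpsi : IsOBH A B psi) :
    Function.Bijective psi ∧ ∀ u v, A u v ↔ B (psi u) (psi v) := by
  obtain ⟨hmap, hbij⟩ := hpsi
  have hsurj : Function.Surjective psi := by
    rcases isEmpty_or_nonempty W with hW | hW
    · intro w; exact hW.elim w
    · have hV : Nonempty V := by
        have h1 : 0 < Fintype.card W := Fintype.card_pos
        have : 0 < Fintype.card V := by omega
        exact Fintype.card_pos_iff.mp this
      obtain ⟨v0⟩ := hV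
      intro w
      induction hsc (psi v0) w with
      | refl => exact ⟨v0, rfl⟩
      | tail _ hb ih =>
          obtain ⟨x, hx⟩ := ih
          obtain ⟨y, _, hyeq⟩ := (hbij x).2.2 (show _ ∈ {y | B (psi x) y} from by
            simp only [Set.mem_setOf_eq, hx]; exact hb)
          exact ⟨y, hyeq⟩
  have hbijf : Function.Bijective psi :=
    (Fintype.bijective_iff_surjective_and_card psi).2 ⟨hsurj, hcard⟩
  refine ⟨hbijf, fun u v => ⟨fun h => hmap h, fun h => ?_⟩⟩
  obtain ⟨x, hxA, hxeq⟩ := (hbij u).2.2 (show _ ∈ {y | B (psi u) y} from h)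
  rwa [hbijf.injective hxeq] at hxA
end

section
/- Let G⃗ be an oriented graph admitting a degree-preserving out-neighbourhood bijective homomorphism ψ to a strongly connected oriented graph H⃗. Then all fibres of ψ have the same size: |ψ⁻¹(u)| = |ψ⁻¹(v)| for all vertices u, v of H⃗. -/
open SimpleGraph

/-! Count the arcs from `ψ⁻¹(N⁻(w))` into the fibre `ψ⁻¹(w)`. Every tail sends exactly one arc
into the fibre, while every head `y` receives at most `d⁻(y) ≤ d⁻(w)` of them: `ψ` preserves
out-degrees and total degrees, and `d(w) ≤ d⁺(w) + d⁻(w)`. So the fibres over `N⁻(w)` have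
total size at most `d⁻(w) · |ψ⁻¹(w)|`, and if the fibre over `w` has minimal size then so do
the fibres over all in-neighbours of `w`. Since every vertex reaches a vertex with a minimal
fibre, all fibres have the minimal size. -/

open Finset
open scoped Classical

theorem Finset.forall_eq_of_le_of_sum_le_card_mul {ι : Type*} {s : Finset ι} {f : ι → ℕ}
    {m : ℕ} (hle : ∀ i ∈ s, m ≤ f i) (hsum : ∑ i ∈ s, f i ≤ #s * m) : ∀ i ∈ s, f i = m := by
  have hconst : ∑ _i ∈ s, m = ∑ i ∈ s, f i :=
    le_antisymm (sum_le_sum hle) (by rwa [sum_const, smul_eq_mul])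
  exact fun i hi => ((sum_eq_sum_iff_of_le hle).1 hconst i hi).symm

namespace IsOBH

variable {V W : Type*} {A : V → V → Prop} {B : W → W → Prop} {psi : V → W}

theorem card_filter_adj_fiber_eq_one [Fintype V] (hpsi : IsOBH A B psi) {x : V} {w : W}
    (hw : B (psi x) w) : #{y | A x y ∧ psi y = w} = 1 := by
  obtain ⟨y, hxy, rfl⟩ := (hpsi.2 x).surjOn hw
  refine card_eq_one.2 ⟨y, eq_singleton_iff_unique_mem.2 ⟨mem_filter.2 ⟨mem_univ _, hxy, rfl⟩, ?_⟩⟩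
  simp only [mem_filter, mem_univ, true_and, and_imp]
  exact fun z hxz hz => (hpsi.2 x).injOn hxz hxy hz

theorem natCard_out_eq (hpsi : IsOBH A B psi) (v : V) :
    Nat.card {u | A v u} = Nat.card {w | B (psi v) w} :=
  Nat.card_congr ((hpsi.2 v).equiv psi)

theorem natCard_in_le [Finite V] (hpsi : IsOBH A B psi) (hA : ∀ u v, A u v → ¬ A v u) {v : V}
    (hdeg : Nat.card {u | A v u ∨ A u v} = Nat.card {w | B (psi v) w ∨ B w (psi v)}) :
    Nat.card {u | A u v} ≤ Nat.card {w | B w (psi v)} := by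
  have hout := hpsi.natCard_out_eq v
  simp only [Nat.card_coe_set_eq, Set.ofPred_or] at hdeg hout ⊢
  rw [Set.ncard_union_eq (s := {u | A v u}) (t := {u | A u v})
    (Set.disjoint_left.2 fun u => hA v u)] at hdeg
  have := Set.ncard_union_le {w | B (psi v) w} {w | B w (psi v)}
  omega

theorem sum_card_fiber_le [Fintype V] [Fintype W] (hpsi : IsOBH A B psi)
    (hA : ∀ u v, A u v → ¬ A v u)
    (hdeg : ∀ v : V,
      Nat.card {u | A v u ∨ A u v} = Nat.card {w | B (psi v) w ∨ B w (psi v)}) (w : W) :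
    ∑ u ∈ {u | B u w}, #{x | psi x = u} ≤ #{u | B u w} * #{x | psi x = w} := by
  set tails : Finset V := {x | B (psi x) w}
  set fiber : Finset V := {x | psi x = w}
  have htails : #tails = ∑ u ∈ {u | B u w}, #{x | psi x = u} := by
    rw [card_eq_sum_card_fiberwise (f := psi) (t := {u | B u w})
      fun x hx => by simpa [tails] using hx]
    refine sum_congr rfl fun u hu => congrArg card ?_
    ext x
    simp only [mem_filter, mem_univ, true_and, tails]
    exact ⟨And.right, fun h => ⟨h ▸ (mem_filter.1 hu).2, h⟩⟩
  have hcount := card_nsmul_le_card_nsmul (s := tails) (t := fiber) (m := 1)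
    (n := #{u | B u w}) A
    (fun x hx => by
      rw [bipartiteAbove, ← hpsi.card_filter_adj_fiber_eq_one (mem_filter.1 hx).2]
      simp only [fiber, filter_filter, and_comm]
      rfl)
    (fun y hy => by
      obtain rfl := (mem_filter.1 hy).2
      have hin := hpsi.natCard_in_le hA (hdeg y)
      rw [Nat.card_eq_card_toFinset, Nat.card_eq_card_toFinset, Set.toFinset_ofPred,
        Set.toFinset_ofPred] at hin
      exact (card_le_card (monotone_filter_left _ (subset_univ _))).trans hin)
  simpa [htails, mul_comm] using hcount

end IsOBH

theorem stmt14_general {V W : Type*} [Fintype V] [Fintype W]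
    (A : V → V → Prop) (B : W → W → Prop)
    (hA : ∀ u v, A u v → ¬ A v u)
    (hsc : ∀ u v : W, Relation.ReflTransGen B u v)
    (psi : V → W) (hpsi : IsOBH A B psi)
    (hdeg : ∀ v : V,
      Nat.card {u | A v u ∨ A u v} = Nat.card {w | B (psi v) w ∨ B w (psi v)}) :
    ∀ u v : W, Nat.card (psi ⁻¹' {u}) = Nat.card (psi ⁻¹' {v}) := by
  intro u v
  have hfiber : ∀ w, Nat.card (psi ⁻¹' {w}) = #{x | psi x = w} := fun w => by
    rw [Nat.card_eq_card_toFinset]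
    congr 1
    ext x
    simp
  obtain ⟨w₀, -, hw₀⟩ := exists_min_image univ (fun w => #{x | psi x = w}) ⟨u, mem_univ u⟩
  have hmin : ∀ w, #{x | psi x = w} = #{x | psi x = w₀} := fun w => by
    induction hsc w w₀ using Relation.ReflTransGen.head_induction_on with
    | refl => rfl
    | head hac _ ih =>
      exact (forall_eq_of_le_of_sum_le_card_mul (fun i _ => ih ▸ hw₀ i (mem_univ i))
        (hpsi.sum_card_fiber_le hA hdeg _) _ (by simpa using hac)).trans ih
  rw [hfiber, hfiber, hmin u, hmin v]

theorem stmt14 {V W : Type*} [Fintype V] [Fintype W]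
    (A : V → V → Prop) (B : W → W → Prop)
    (hA : ∀ u v, A u v → ¬ A v u) (hB : ∀ u v, B u v → ¬ B v u)
    (hsc : ∀ u v : W, Relation.ReflTransGen B u v)
    (psi : V → W) (hpsi : IsOBH A B psi)
    (hdeg : ∀ v : V,
      Nat.card {u | A v u ∨ A u v} = Nat.card {w | B (psi v) w ∨ B w (psi v)}) :
    ∀ u v : W, Nat.card (psi ⁻¹' {u}) = Nat.card (psi ⁻¹' {v}) :=
  stmt14_general A B hA hsc psi hpsi hdeg
end

section
/- Let p ≥ 2 and let G be a 2p-regular graph with no induced K_{1,p+1}. If G⃗ is an orientation of G admitting an out-neighbourhood bijective homomorphism ψ to L⃗(K_{p+2}), then ψ is a locally bijective homomorphism from G to L*(K_{p+2}). -/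
open SimpleGraph

/-!
Out-neighbourhoods are mapped bijectively by hypothesis, so only the in-neighbourhood `N⁻(v)`
matters. By `2p`-regularity it has `p` vertices, as does the in-neighbourhood of `ψ(v)` in
`L⃗(K_{p+2})`. The vertices of `N⁻(v)` are pairwise non-adjacent, because their images all end
at the same point of `K_{p+2}`. If an in-neighbour `b` of `ψ(v)` were missed, the out-neighbour
`w` of `v` with `ψ(v) → ψ(w) → b` would be non-adjacent to all of `N⁻(v)` (`L⃗(K_q)` has no
transitive triangles, and a directed 2-path determines its middle vertex), so `v` together with
`{w} ∪ N⁻(v)` would induce a `K_{1,p+1}`. Hence `ψ` maps `N⁻(v)` onto, and by counting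
bijectively to, the in-neighbourhood of `ψ(v)`.
-/

namespace LKArc

variable {q : ℕ} {a b c : LKV q}

lemma ne (h : LKArc q a b) : a ≠ b := by
  rintro rfl
  exact a.2 h.1.symm

lemma asymm (h : LKArc q a b) : ¬ LKArc q b a :=
  fun h' => h'.2 h.1.symm

lemma snd_ne_snd (h : LKArc q a b) : a.1.2 ≠ b.1.2 :=
  h.1 ▸ b.2

lemma not_trans (hab : LKArc q a b) (hbc : LKArc q b c) : ¬ LKArc q a c :=
  fun hac => b.2 (hab.1.symm.trans (hac.1.trans hbc.1.symm))

lemma middle_unique {a' : LKV q} (hca : LKArc q c a) (hab : LKArc q a b)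
    (hca' : LKArc q c a') (ha'b : LKArc q a' b) : a = a' :=
  Subtype.ext (Prod.ext (hca.1.symm.trans hca'.1) (hab.1.trans ha'b.1.symm))

end LKArc

namespace LKV

variable {q : ℕ}

def swap (a : LKV q) : LKV q := ⟨a.1.swap, a.2.symm⟩

lemma swap_swap (a : LKV q) : a.swap.swap = a := rfl

lemma lkArc_swap {a b : LKV q} : LKArc q b.swap a.swap ↔ LKArc q a b :=
  and_congr eq_comm ne_comm

lemma ncard_setOf_lkArc [NeZero q] (a : LKV q) : {b : LKV q | LKArc q a b}.ncard = q - 2 := by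
  have hinj : Set.InjOn (fun b : LKV q => b.1.2) {b | LKArc q a b} :=
    fun b hb c hc h => Subtype.ext (Prod.ext (hb.1.symm.trans hc.1) h)
  have himage :
      (fun b : LKV q => b.1.2) '' {b | LKArc q a b} = ({a.1.1, a.1.2} : Set (ZMod q))ᶜ := by
    ext k
    simp only [Set.mem_image, Set.mem_ofPred_eq, Set.mem_compl_iff, Set.mem_insert_iff,
      Set.mem_singleton_iff, not_or]
    constructor
    · rintro ⟨b, hab, rfl⟩
      exact ⟨hab.2.symm, hab.snd_ne_snd.symm⟩
    · rintro ⟨h1, h2⟩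
      exact ⟨⟨(a.1.2, k), Ne.symm h2⟩, ⟨rfl, Ne.symm h1⟩, rfl⟩
  have hcompl := Set.ncard_add_ncard_compl ({a.1.1, a.1.2} : Set (ZMod q))
  rw [Set.ncard_pair a.2, Nat.card_zmod] at hcompl
  rw [← hinj.ncard_image, himage]
  omega

lemma ncard_setOf_lkArc_left [NeZero q] (b : LKV q) :
    {a : LKV q | LKArc q a b}.ncard = q - 2 := by
  have h : {a : LKV q | LKArc q a b} = swap '' {c | LKArc q b.swap c} := by
    ext a
    rw [Set.image_eq_preimage_of_inverse swap_swap swap_swap]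
    exact lkArc_swap.symm
  rw [h, Set.ncard_image_of_injective _ (Function.LeftInverse.injective swap_swap),
    ncard_setOf_lkArc]

end LKV

lemma lstarK_adj {q : ℕ} {a b : LKV q} : (LstarK q).Adj a b ↔ LKArc q a b ∨ LKArc q b a := by
  refine ⟨And.right, fun h => ⟨?_, h⟩⟩
  rcases h with h | h
  exacts [h.ne, h.ne.symm]

lemma lstarK_neighborSet {q : ℕ} (b : LKV q) :
    (LstarK q).neighborSet b = {c | LKArc q b c} ∪ {c | LKArc q c b} :=
  Set.ext fun _ => lstarK_adj

namespace SimpleGraph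

variable {V : Type*} {G : SimpleGraph V}

lemma nonempty_star_embedding_of_isIndepSet {v : V} {s : Finset V}
    (hs : ↑s ⊆ G.neighborSet v) (hind : G.IsIndepSet s) :
    Nonempty (completeBipartiteGraph (Fin 1) (Fin s.card) ↪g G) := by
  have hv : v ∉ s := fun h => G.irrefl (hs h)
  let e := s.equivFin.symm
  let f : Fin 1 ⊕ Fin s.card → V := Sum.elim (fun _ => v) (fun i => e i)
  have hf : f.Injective := by
    rintro (a | a) (b | b) h <;> simp only [f, Sum.elim_inl, Sum.elim_inr] at h
    · exact congrArg Sum.inl (Subsingleton.elim a b)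
    · exact absurd (h ▸ (e b).2) hv
    · exact absurd (h ▸ (e a).2) hv
    · exact congrArg Sum.inr (e.injective (Subtype.ext h))
  refine ⟨⟨⟨f, hf⟩, fun {x y} => ?_⟩⟩
  change G.Adj (f x) (f y) ↔ _
  rcases x with a | a <;> rcases y with b | b <;>
    simp only [f, Sum.elim_inl, Sum.elim_inr, SimpleGraph.irrefl, completeBipartiteGraph_adj,
      Sum.isLeft_inl, Sum.isRight_inl, Sum.isLeft_inr, Sum.isRight_inr, Bool.false_eq_true,
      and_self, and_true, and_false, or_self, or_true, or_false, iff_true, iff_false]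
  · exact hs (e b).2
  · exact (hs (e a).2).symm
  · exact fun h => hind (e a).2 (e b).2 h.ne h

lemma ncard_le_of_isIndepSet {n : ℕ}
    (hfree : ¬ Nonempty (completeBipartiteGraph (Fin 1) (Fin (n + 1)) ↪g G)) {v : V} {s : Set V}
    (hs : s ⊆ G.neighborSet v) (hind : G.IsIndepSet s) : s.ncard ≤ n := by
  by_contra! h
  obtain ⟨t, hts, ht⟩ := Set.exists_subset_card_eq (n := n + 1) h
  lift t to Finset V using Set.finite_of_ncard_pos (by omega)
  rw [Set.ncard_coe_finset] at ht
  exact hfree (ht ▸ nonempty_star_embedding_of_isIndepSet (hts.trans hs) (hind.mono hts))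

end SimpleGraph

namespace IsOrientation

variable {V : Type*} {G : SimpleGraph V} {A : V → V → Prop}

lemma neighborSet_eq (hA : IsOrientation G A) (v : V) :
    G.neighborSet v = {x | A v x} ∪ {x | A x v} :=
  Set.ext fun x => hA.1 v x

lemma disjoint (hA : IsOrientation G A) (v : V) : Disjoint {x | A v x} {x | A x v} :=
  Set.disjoint_left.2 fun x => hA.2 v x

lemma lstarK_adj_of_isOBH {q : ℕ} {psi : V → LKV q} (hA : IsOrientation G A)
    (hpsi : IsOBH A (LKArc q) psi) {u v : V} (h : G.Adj u v) : (LstarK q).Adj (psi u) (psi v) :=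
  lstarK_adj.2 (((hA.1 u v).1 h).imp (fun h => hpsi.1 h) (fun h => hpsi.1 h))

end IsOrientation

section OBHToLBH

variable {V : Type*} {G : SimpleGraph V} {p : ℕ} {A : V → V → Prop} {psi : V → LKV (p + 2)}

lemma ncard_setOf_arc_left [Fintype V] [DecidableRel G.Adj] (hreg : G.IsRegularOfDegree (2 * p))
    (hA : IsOrientation G A) (hpsi : IsOBH A (LKArc (p + 2)) psi) (v : V) :
    {x | A x v}.ncard = p := by
  have hout : {x | A v x}.ncard = p := by
    rw [← (hpsi.2 v).injOn.ncard_image, (hpsi.2 v).image_eq, LKV.ncard_setOf_lkArc,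
      Nat.add_sub_cancel]
  have hdeg : (G.neighborSet v).ncard = 2 * p := by
    rw [Set.ncard_eq_toFinset_card']
    exact hreg v
  rw [hA.neighborSet_eq, Set.ncard_union_eq (hA.disjoint v)] at hdeg
  omega

lemma surjOn_setOf_arc_left [Finite V]
    (hfree : ¬ Nonempty (completeBipartiteGraph (Fin 1) (Fin (p + 1)) ↪g G))
    (hA : IsOrientation G A) (hpsi : IsOBH A (LKArc (p + 2)) psi) {v : V}
    (hin : {x | A x v}.ncard = p) :
    Set.SurjOn psi {x | A x v} {b | LKArc (p + 2) b (psi v)} := by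
  intro b hb
  by_contra hmiss
  set a := psi v
  let c : LKV (p + 2) := ⟨(a.1.2, b.1.1), hb.2.symm⟩
  have hac : LKArc (p + 2) a c := ⟨rfl, fun h => b.2 (h.symm.trans hb.1.symm)⟩
  have hcb : LKArc (p + 2) c b := ⟨rfl, hb.snd_ne_snd.symm⟩
  obtain ⟨w, hw, hwc⟩ := (hpsi.2 v).surjOn hac
  have hin_indep : G.IsIndepSet {x | A x v} := by
    intro x hx y hy _ hxy
    have hsnd : (psi x).1.2 = (psi y).1.2 := (hpsi.1 hx).1.trans (hpsi.1 hy).1.symm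
    rcases (hA.1 x y).1 hxy with h | h
    exacts [(hpsi.1 h).snd_ne_snd hsnd, (hpsi.1 h).snd_ne_snd hsnd.symm]
  have hw_nonadj : ∀ x ∈ {x | A x v}, ¬ G.Adj w x := by
    intro x hx hwx
    rcases (hA.1 w x).1 hwx with h | h
    · exact hmiss ⟨x, hx, LKArc.middle_unique (hwc ▸ hpsi.1 h) (hpsi.1 hx) hcb hb⟩
    · exact LKArc.not_trans (hpsi.1 hx) hac (hwc ▸ hpsi.1 h)
  have hind : G.IsIndepSet (insert w {x | A x v}) :=
    Set.pairwise_insert.2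
      ⟨hin_indep, fun x hx _ => ⟨hw_nonadj x hx, fun h => hw_nonadj x hx h.symm⟩⟩
  have hsub : insert w {x | A x v} ⊆ G.neighborSet v :=
    hA.neighborSet_eq v ▸ Set.insert_subset (Or.inl hw) Set.subset_union_right
  have hcard := ncard_le_of_isIndepSet hfree hsub hind
  rw [Set.ncard_insert_of_notMem (show w ∉ {x | A x v} from hA.2 v w hw), hin] at hcard
  omega

lemma bijOn_setOf_arc_left [Fintype V] [DecidableRel G.Adj]
    (hreg : G.IsRegularOfDegree (2 * p))
    (hfree : ¬ Nonempty (completeBipartiteGraph (Fin 1) (Fin (p + 1)) ↪g G))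
    (hA : IsOrientation G A) (hpsi : IsOBH A (LKArc (p + 2)) psi) (v : V) :
    Set.BijOn psi {x | A x v} {b | LKArc (p + 2) b (psi v)} := by
  have hin := ncard_setOf_arc_left hreg hA hpsi v
  have hmaps : Set.MapsTo psi {x | A x v} {b | LKArc (p + 2) b (psi v)} := fun _ hx => hpsi.1 hx
  have hsurj := surjOn_setOf_arc_left hfree hA hpsi hin
  have hinj : Set.InjOn psi {x | A x v} := by
    refine Set.injOn_of_ncard_image_eq ?_
    rw [hsurj.image_eq_of_mapsTo hmaps, LKV.ncard_setOf_lkArc_left, hin, Nat.add_sub_cancel]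
  exact ⟨hmaps, hinj, hsurj⟩

end OBHToLBH

theorem stmt15_general {V : Type*} [Fintype V] (p : ℕ)
    (G : SimpleGraph V) [DecidableRel G.Adj] (hreg : G.IsRegularOfDegree (2 * p))
    (hfree : ¬ Nonempty (completeBipartiteGraph (Fin 1) (Fin (p + 1)) ↪g G))
    (A : V → V → Prop) (hA : IsOrientation G A)
    (psi : V → LKV (p + 2)) (hpsi : IsOBH A (LKArc (p + 2)) psi) :
    IsLBH G (LstarK (p + 2)) psi := by
  refine ⟨fun _ _ => hA.lstarK_adj_of_isOBH hpsi, fun v => ?_⟩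
  have hout := hpsi.2 v
  have hin := bijOn_setOf_arc_left hreg hfree hA hpsi v
  rw [hA.neighborSet_eq, lstarK_neighborSet]
  refine hout.union hin ((Set.injOn_union (hA.disjoint v)).2 ⟨hout.injOn, hin.injOn, ?_⟩)
  intro x hx y hy hxy
  exact (hout.mapsTo hx).asymm (hxy ▸ hin.mapsTo hy)

theorem stmt15 {V : Type*} [Fintype V] (p : ℕ) (hp : 2 ≤ p)
    (G : SimpleGraph V) [DecidableRel G.Adj] (hreg : G.IsRegularOfDegree (2 * p))
    (hfree : ¬ Nonempty (completeBipartiteGraph (Fin 1) (Fin (p + 1)) ↪g G))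
    (A : V → V → Prop) (hA : IsOrientation G A)
    (psi : V → LKV (p + 2)) (hpsi : IsOBH A (LKArc (p + 2)) psi) :
    IsLBH G (LstarK (p + 2)) psi :=
  stmt15_general p G hreg hfree A hA psi hpsi
end

section
/- Let p ≥ 2 and let G be a K_{1,p+1}-free 2p-regular graph. Then G admits a (p+2)-star colouring if and only if G admits a locally bijective homomorphism to L*(K_{p+2}). -/
open SimpleGraph

/-!
Call an edge `uv` dominated by `u` when `v` shares its colour with another neighbour of `u`. In a
star colouring no edge is dominated from both ends. For a `(p+2)`-star colouring of a
`2p`-regular graph, the neighbours that `v` does not dominate have pairwise distinct colours,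
missing `f v` and the colour that the pigeonhole principle repeats around `v`; so there are at
most `p` of them. Double counting dominated pairs then shows that every edge is dominated from
exactly one end and that each `v` has a single heavy colour `j v`, worn by `p` of its neighbours,
every other colour `≠ f v` being worn by exactly one. The map `v ↦ (f v, j v)` is then a locally
bijective homomorphism to `L*(K_{p+2})`: light neighbours go to in-neighbours, heavy ones to
out-neighbours, and `K_{1,p+1}`-freeness makes the heavy colours of the heavy neighbours cover
all `p` out-neighbours. Conversely, the tail colouring `(i, j) ↦ i` of `L*(K_q)` is a star
colouring, and it pulls back along any locally bijective homomorphism.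
-/

open Finset

section

variable {q : ℕ}

lemma LKV.ext_iff {a b : LKV q} : a = b ↔ a.1.1 = b.1.1 ∧ a.1.2 = b.1.2 :=
  Subtype.ext_iff.trans Prod.ext_iff

namespace LstarK

lemma fst_ne_of_adj {a b : LKV q} (h : (LstarK q).Adj a b) : a.1.1 ≠ b.1.1 := by
  rcases h with ⟨-, h | h⟩
  · rw [← h.1]; exact a.2
  · rw [← h.1]; exact fun e => b.2 e.symm

lemma eq_or_eq_of_path {x₁ x₂ x₃ x₄ : LKV q} (h₁₂ : (LstarK q).Adj x₁ x₂)
    (h₂₃ : (LstarK q).Adj x₂ x₃) (h₃₄ : (LstarK q).Adj x₃ x₄)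
    (h₁₃ : x₁.1.1 = x₃.1.1) (h₂₄ : x₂.1.1 = x₄.1.1) : x₁ = x₃ ∨ x₂ = x₄ := by
  rcases h₁₂ with ⟨-, h₁₂⟩
  rcases h₂₃ with ⟨-, h₂₃⟩
  rcases h₃₄ with ⟨-, h₃₄⟩
  -- if `x₁` and `x₃` both have arcs into `x₂` they coincide; otherwise `x₂ → x₃`, which forces
  -- `x₄ → x₃` and hence `x₄ = x₂`
  simp only [LKV.ext_iff]
  grind [LKArc]

end LstarK

end

theorem IsLBH.isStarColoring_fst {V : Type*} {G : SimpleGraph V} {q : ℕ} {ψ : V → LKV q}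
    (h : IsLBH G (LstarK q) ψ) : IsStarColoring G fun v => (ψ v).1.1 := by
  refine ⟨fun u v huv => LstarK.fst_ne_of_adj (h.1 huv), ?_⟩
  rintro a b c d hab hbc hcd hac hbd - ⟨hc₁, hc₂⟩
  have hψac : ψ a ≠ ψ c := fun e => hac <| (h.2 b).injOn hab.symm hbc e
  have hψbd : ψ b ≠ ψ d := fun e => hbd <| (h.2 c).injOn hbc.symm hcd e
  exact (LstarK.eq_or_eq_of_path (h.1 hab) (h.1 hbc) (h.1 hcd) hc₁ hc₂).elim hψac hψbd

lemma SimpleGraph.exists_adj_of_forall_adj_of_card_eq {V : Type*} {G : SimpleGraph V} {n : ℕ}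
    (hfree : ¬ Nonempty (completeBipartiteGraph (Fin 1) (Fin n) ↪g G)) {v : V} {S : Finset V}
    (hS : ∀ u ∈ S, G.Adj v u) (hcard : #S = n) : ∃ x ∈ S, ∃ y ∈ S, G.Adj x y := by
  by_contra! hind
  let e := S.equivFinOfCardEq hcard
  let g : Fin n → V := fun i => e.symm i
  have hg : Function.Injective g := Subtype.val_injective.comp e.symm.injective
  have hgS : ∀ i, g i ∈ S := fun i => (e.symm i).2
  refine hfree ⟨⟨⟨Sum.elim (fun _ => v) g, ?_⟩, ?_⟩⟩
  · exact (Function.injective_of_subsingleton _).sumElim hg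
      fun _ i h => G.irrefl (h ▸ hS _ (hgS i))
  · rintro (i | i) (j | j) <;> simp [hS _ (hgS _), (hS _ (hgS _)).symm, hind _ (hgS _) _ (hgS _)]

section Domination

variable {V α : Type*} {G : SimpleGraph V} {f : V → α}

lemma IsStarColoring.colour_ne_of_adj_of_twin (hf : IsStarColoring G f) {v u₁ u₂ w : V}
    (h₁ : G.Adj v u₁) (h₂ : G.Adj v u₂) (hne : u₁ ≠ u₂) (hc : f u₁ = f u₂)
    (hw : G.Adj u₁ w) (hwv : w ≠ v) : f w ≠ f v := by
  intro e
  have hu₂w : u₂ ≠ w := by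
    rintro rfl
    exact hf.1 hw hc
  exact hf.2 u₂ v u₁ w h₂.symm h₁ hw hne.symm hwv.symm hu₂w ⟨hc.symm, e.symm⟩

variable [Fintype V] [DecidableRel G.Adj] [DecidableEq α]

variable (G f) in
def nbrsOfColour (v : V) (c : α) : Finset V := {u ∈ G.neighborFinset v | f u = c}

variable (G f) in
def Dominates (u v : V) : Prop := G.Adj u v ∧ 2 ≤ #(nbrsOfColour G f u (f v))

instance : DecidableRel (Dominates G f) := fun _ _ => inferInstanceAs (Decidable (_ ∧ _))

variable (G f) in
def dominated (v : V) : Finset V := {u | Dominates G f v u}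

variable (G f) in
def dominators (v : V) : Finset V := {u | Dominates G f u v}

variable (G f) in
def undominated (v : V) : Finset V := {u ∈ G.neighborFinset v | ¬ Dominates G f v u}

lemma mem_nbrsOfColour {v u : V} {c : α} : u ∈ nbrsOfColour G f v c ↔ G.Adj v u ∧ f u = c := by
  simp [nbrsOfColour]

lemma IsStarColoring.nbrsOfColour_self_eq_empty (hf : IsStarColoring G f) (v : V) :
    nbrsOfColour G f v (f v) = ∅ :=
  eq_empty_of_forall_notMem fun _ hu =>
    hf.1 (mem_nbrsOfColour.1 hu).1.symm (mem_nbrsOfColour.1 hu).2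

lemma IsStarColoring.nbrsOfColour_eq_singleton_of_dominates (hf : IsStarColoring G f) {u v : V}
    (h : Dominates G f v u) : nbrsOfColour G f u (f v) = {v} := by
  obtain ⟨hvu, hcard⟩ := h
  obtain ⟨u', hu', hne⟩ := exists_mem_ne hcard u
  rw [mem_nbrsOfColour] at hu'
  refine eq_singleton_iff_unique_mem.2 ⟨mem_nbrsOfColour.2 ⟨hvu.symm, rfl⟩, fun w hw => ?_⟩
  rw [mem_nbrsOfColour] at hw
  by_contra hwv
  exact hf.colour_ne_of_adj_of_twin hvu hu'.1 hne.symm hu'.2.symm hw.1 hwv hw.2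

lemma IsStarColoring.not_dominates_of_dominates (hf : IsStarColoring G f) {u v : V}
    (h : Dominates G f v u) : ¬ Dominates G f u v := by
  rintro ⟨-, hcard⟩
  simp [hf.nbrsOfColour_eq_singleton_of_dominates h] at hcard

lemma nbrsOfColour_eq_singleton_of_mem_undominated {v u : V} (hu : u ∈ undominated G f v) :
    nbrsOfColour G f v (f u) = {u} := by
  simp only [undominated, mem_filter, mem_neighborFinset, Dominates, not_and, not_le] at hu
  have hmem : u ∈ nbrsOfColour G f v (f u) := mem_nbrsOfColour.2 ⟨hu.1, rfl⟩
  have hlt := hu.2 hu.1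
  obtain ⟨w, hw⟩ := card_eq_one.1 (le_antisymm (by omega) (card_pos.2 ⟨u, hmem⟩))
  rw [hw, mem_singleton] at hmem
  rw [hw, hmem]

lemma injOn_undominated (v : V) : Set.InjOn f (undominated G f v) := fun u hu u' hu' he => by
  have h := nbrsOfColour_eq_singleton_of_mem_undominated (mem_coe.1 hu)
  rwa [he, nbrsOfColour_eq_singleton_of_mem_undominated (mem_coe.1 hu'), singleton_inj,
    eq_comm] at h

lemma IsStarColoring.dominators_subset_undominated (hf : IsStarColoring G f) (v : V) :
    dominators G f v ⊆ undominated G f v := fun u hu => by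
  have hu : Dominates G f u v := (mem_filter.1 hu).2
  exact mem_filter.2 ⟨(G.mem_neighborFinset v u).2 hu.1.symm, hf.not_dominates_of_dominates hu⟩

lemma sum_card_dominated_eq_sum_card_dominators :
    ∑ v, #(dominated G f v) = ∑ v, #(dominators G f v) := by
  simp only [dominated, dominators, card_filter]
  exact sum_comm

variable {p : ℕ}

lemma card_dominated_add_card_undominated (hreg : G.IsRegularOfDegree (2 * p)) (v : V) :
    #(dominated G f v) + #(undominated G f v) = 2 * p := by
  have hdom : dominated G f v = {u ∈ G.neighborFinset v | Dominates G f v u} := by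
    ext u
    simpa [dominated] using fun h : Dominates G f v u => h.1
  rw [hdom, undominated, card_filter_add_card_filter_not, card_neighborFinset_eq_degree, hreg v]

variable (G f p) in
def IsHeavyColour (v : V) (c : α) : Prop :=
  c ≠ f v ∧ #(nbrsOfColour G f v c) = p ∧ ∀ k, k ≠ f v → k ≠ c → #(nbrsOfColour G f v k) = 1

lemma IsHeavyColour.eq_of_two_le_card (hf : IsStarColoring G f) {v : V} {c k : α}
    (h : IsHeavyColour G f p v c) (hk : 2 ≤ #(nbrsOfColour G f v k)) : k = c := by
  by_contra hkc
  have hkv : k ≠ f v := by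
    rintro rfl
    simp [hf.nbrsOfColour_self_eq_empty] at hk
  have := h.2.2 k hkv hkc
  omega

variable [Fintype α]

lemma IsStarColoring.mapsTo_undominated (hf : IsStarColoring G f) {v : V} {c : α}
    (hc : 2 ≤ #(nbrsOfColour G f v c)) :
    Set.MapsTo f (undominated G f v) ((univ.erase (f v)).erase c : Finset α) := by
  intro u hu
  have hadj : G.Adj v u := (G.mem_neighborFinset v u).1 (mem_filter.1 hu).1
  refine mem_erase.2 ⟨?_, mem_erase.2 ⟨hf.1 hadj.symm, mem_univ _⟩⟩
  rintro rfl
  simp [nbrsOfColour_eq_singleton_of_mem_undominated (mem_coe.1 hu)] at hc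

lemma IsStarColoring.exists_two_le_card_nbrsOfColour (hf : IsStarColoring G f) (hp : 2 ≤ p)
    (hα : Fintype.card α = p + 2) (hreg : G.IsRegularOfDegree (2 * p)) (v : V) :
    ∃ c ≠ f v, 2 ≤ #(nbrsOfColour G f v c) := by
  have hmaps : ∀ u ∈ G.neighborFinset v, f u ∈ univ.erase (f v) := fun u hu =>
    mem_erase.2 ⟨hf.1 ((G.mem_neighborFinset v u).1 hu).symm, mem_univ _⟩
  obtain ⟨c, hc, hcard⟩ := exists_lt_card_fiber_of_mul_lt_card_of_maps_to (n := 1) hmaps (by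
    rw [card_erase_of_mem (mem_univ _), card_univ, hα, card_neighborFinset_eq_degree, hreg v]
    omega)
  exact ⟨c, (mem_erase.1 hc).1, hcard⟩

lemma card_erase_erase_of_ne {c d : α} (hα : Fintype.card α = p + 2) (h : c ≠ d) :
    #((univ.erase d).erase c) = p := by
  rw [card_erase_of_mem (mem_erase.2 ⟨h, mem_univ _⟩), card_erase_of_mem (mem_univ _), card_univ,
    hα]
  rfl

lemma IsStarColoring.card_undominated_le (hf : IsStarColoring G f) (hp : 2 ≤ p)
    (hα : Fintype.card α = p + 2) (hreg : G.IsRegularOfDegree (2 * p)) (v : V) :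
    #(undominated G f v) ≤ p := by
  obtain ⟨c, hcv, hc⟩ := hf.exists_two_le_card_nbrsOfColour hp hα hreg v
  calc #(undominated G f v) ≤ #((univ.erase (f v)).erase c) :=
        card_le_card_of_injOn f (hf.mapsTo_undominated hc) (injOn_undominated v)
    _ = p := card_erase_erase_of_ne hα hcv

lemma IsStarColoring.card_undominated_eq_and_dominators_eq (hf : IsStarColoring G f)
    (hp : 2 ≤ p) (hα : Fintype.card α = p + 2) (hreg : G.IsRegularOfDegree (2 * p)) (v : V) :
    #(undominated G f v) = p ∧ dominators G f v = undominated G f v := by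
  have hle := hf.card_undominated_le hp hα hreg
  have hsub := hf.dominators_subset_undominated
  have hsum_add : ∑ v, #(dominators G f v) + ∑ v, #(undominated G f v) = 2 * ∑ _v : V, p := by
    rw [← sum_card_dominated_eq_sum_card_dominators, ← sum_add_distrib, mul_sum]
    exact sum_congr rfl fun v _ => card_dominated_add_card_undominated hreg v
  have hsum_sub : ∑ v, #(dominators G f v) ≤ ∑ v, #(undominated G f v) :=
    sum_le_sum fun v _ => card_le_card (hsub v)
  have hsum_le : ∑ v, #(undominated G f v) ≤ ∑ _v : V, p := sum_le_sum fun v _ => hle v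
  have hund : ∀ v, #(undominated G f v) = p :=
    fun v => (sum_eq_sum_iff_of_le fun v _ => hle v).1 (by omega) v (mem_univ v)
  have hdom : #(dominators G f v) = #(undominated G f v) :=
    (sum_eq_sum_iff_of_le fun v _ => card_le_card (hsub v)).1 (by omega) v (mem_univ v)
  exact ⟨hund v, eq_of_subset_of_card_le (hsub v) hdom.ge⟩

lemma IsStarColoring.dominates_of_not_dominates (hf : IsStarColoring G f) (hp : 2 ≤ p)
    (hα : Fintype.card α = p + 2) (hreg : G.IsRegularOfDegree (2 * p)) {u v : V}
    (hadj : G.Adj v u) (h : ¬ Dominates G f v u) : Dominates G f u v := by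
  have hu : u ∈ undominated G f v := mem_filter.2 ⟨(G.mem_neighborFinset v u).2 hadj, h⟩
  rw [← (hf.card_undominated_eq_and_dominators_eq hp hα hreg v).2] at hu
  exact (mem_filter.1 hu).2

lemma IsStarColoring.exists_isHeavyColour (hf : IsStarColoring G f) (hp : 2 ≤ p)
    (hα : Fintype.card α = p + 2) (hreg : G.IsRegularOfDegree (2 * p)) (v : V) :
    ∃ c, IsHeavyColour G f p v c := by
  obtain ⟨c, hcv, hc⟩ := hf.exists_two_le_card_nbrsOfColour hp hα hreg v
  have hund := (hf.card_undominated_eq_and_dominators_eq hp hα hreg v).1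
  have himage : (undominated G f v).image f = (univ.erase (f v)).erase c :=
    eq_of_subset_of_card_le (hf.mapsTo_undominated hc).finsetImage_subset <| by
      rw [card_image_of_injOn (injOn_undominated v), hund, card_erase_erase_of_ne hα hcv]
  have hlight : ∀ k, k ≠ f v → k ≠ c → #(nbrsOfColour G f v k) = 1 := by
    intro k hkv hkc
    obtain ⟨u, hu, rfl⟩ := mem_image.1 (himage ▸ mem_erase.2 ⟨hkc, mem_erase.2 ⟨hkv, mem_univ k⟩⟩)
    rw [nbrsOfColour_eq_singleton_of_mem_undominated hu, card_singleton]
  have hheavy : nbrsOfColour G f v c = dominated G f v := by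
    ext u
    simp only [mem_nbrsOfColour, dominated, mem_filter, mem_univ, true_and]
    constructor
    · rintro ⟨hadj, rfl⟩
      by_contra h
      have hu : f u ∈ (undominated G f v).image f :=
        mem_image_of_mem f (mem_filter.2 ⟨(G.mem_neighborFinset v u).2 hadj, h⟩)
      simp [himage] at hu
    · intro h
      refine ⟨h.1, by_contra fun hne => ?_⟩
      have := hlight (f u) (hf.1 h.1).symm hne
      have := h.2
      omega
  refine ⟨c, hcv, ?_, hlight⟩
  have := card_dominated_add_card_undominated (f := f) hreg v
  rw [hheavy]
  omega

lemma IsStarColoring.heavyColour_eq_iff (hf : IsStarColoring G f) (hp : 2 ≤ p)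
    (hα : Fintype.card α = p + 2) (hreg : G.IsRegularOfDegree (2 * p)) {j : V → α}
    (hj : ∀ v, IsHeavyColour G f p v (j v)) {u v : V} (hadj : G.Adj u v) :
    j u = f v ↔ f u ≠ j v := by
  constructor
  · intro hju hfu
    have hvu : Dominates G f v u := ⟨hadj.symm, by rw [hfu, (hj v).2.1]; exact hp⟩
    have := (hj u).2.1
    rw [hju, hf.nbrsOfColour_eq_singleton_of_dominates hvu, card_singleton] at this
    omega
  · intro hfu
    have hvu : ¬ Dominates G f v u := fun h => by
      have := h.2
      rw [(hj v).2.2 _ (hf.1 hadj) hfu] at this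
      omega
    exact ((hj u).eq_of_two_le_card hf
      (hf.dominates_of_not_dominates hp hα hreg hadj.symm hvu).2).symm

end Domination

section LocallyBijective

variable {V : Type*} {G : SimpleGraph V} {p : ℕ} {f j : V → ZMod (p + 2)}

def colourPair (f j : V → ZMod (p + 2)) (hj : ∀ v, j v ≠ f v) (v : V) : LKV (p + 2) :=
  ⟨(f v, j v), fun e => hj v e.symm⟩

lemma adj_colourPair (hf : IsStarColoring G f) {hj : ∀ v, j v ≠ f v}
    (hdich : ∀ ⦃u v⦄, G.Adj u v → (j u = f v ↔ f u ≠ j v)) ⦃u v : V⦄ (hadj : G.Adj u v) :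
    (LstarK (p + 2)).Adj (colourPair f j hj u) (colourPair f j hj v) := by
  have hne : colourPair f j hj u ≠ colourPair f j hj v := fun e =>
    hf.1 hadj (LKV.ext_iff.1 e).1
  by_cases hfu : f u = j v
  · exact ⟨hne, Or.inr ⟨hfu.symm, fun e => (hdich hadj).1 e.symm hfu⟩⟩
  · exact ⟨hne, Or.inl ⟨(hdich hadj).2 hfu, hfu⟩⟩

variable [Fintype V] [DecidableRel G.Adj]

lemma exists_mem_nbrsOfColour_heavyColour_eq
    (hfree : ¬ Nonempty (completeBipartiteGraph (Fin 1) (Fin (p + 1)) ↪g G))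
    (hf : IsStarColoring G f) (hj : ∀ v, IsHeavyColour G f p v (j v))
    (hdich : ∀ ⦃u v⦄, G.Adj u v → (j u = f v ↔ f u ≠ j v)) {v : V} {k : ZMod (p + 2)}
    (hkv : k ≠ f v) (hkj : k ≠ j v) : ∃ u ∈ nbrsOfColour G f v (j v), j u = k := by
  classical
  obtain ⟨w, hw⟩ := card_eq_one.1 ((hj v).2.2 k hkv hkj)
  obtain ⟨hvw, hfw⟩ := mem_nbrsOfColour.1 (hw ▸ mem_singleton_self w)
  have hjw : j w = f v := (hdich hvw.symm).2 (hfw ▸ hkj)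
  have hwS : w ∉ nbrsOfColour G f v (j v) := fun h => hkj (hfw ▸ (mem_nbrsOfColour.1 h).2)
  have hS : ∀ u ∈ insert w (nbrsOfColour G f v (j v)), G.Adj v u := by
    simp only [mem_insert, mem_nbrsOfColour]
    rintro u (rfl | ⟨hvu, -⟩) <;> assumption
  obtain ⟨x, hx, y, hy, hxy⟩ := exists_adj_of_forall_adj_of_card_eq hfree hS
    (by rw [card_insert_of_notMem hwS, (hj v).2.1])
  -- the heavy neighbours share a colour, so the edge joins `w` to a heavy neighbour `u`
  have key : ∀ u ∈ nbrsOfColour G f v (j v), G.Adj u w → ∃ u ∈ nbrsOfColour G f v (j v), j u = k :=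
    fun u hu huw => ⟨u, hu, hfw ▸ (hdich huw).2
      (by rw [(mem_nbrsOfColour.1 hu).2, hjw]; exact (hj v).1)⟩
  rcases mem_insert.1 hx with rfl | hxS <;> rcases mem_insert.1 hy with rfl | hyS
  · exact (G.irrefl hxy).elim
  · exact key y hyS hxy.symm
  · exact key x hxS hxy
  · exact absurd ((mem_nbrsOfColour.1 hxS).2.trans (mem_nbrsOfColour.1 hyS).2.symm) (hf.1 hxy)

lemma injOn_heavyColour
    (hfree : ¬ Nonempty (completeBipartiteGraph (Fin 1) (Fin (p + 1)) ↪g G))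
    (hf : IsStarColoring G f) (hj : ∀ v, IsHeavyColour G f p v (j v))
    (hdich : ∀ ⦃u v⦄, G.Adj u v → (j u = f v ↔ f u ≠ j v)) (v : V) :
    Set.InjOn j (nbrsOfColour G f v (j v)) := by
  refine injOn_of_surjOn_of_card_le j (t := (univ.erase (f v)).erase (j v)) ?_ ?_ ?_
  · intro u hu
    obtain ⟨hvu, hfu⟩ := mem_nbrsOfColour.1 hu
    refine mem_erase.2 ⟨hfu ▸ (hj u).1, mem_erase.2 ⟨fun e => ?_, mem_univ _⟩⟩
    exact (hdich hvu.symm).1 e hfu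
  · intro k hk
    obtain ⟨hkj, hkv⟩ := mem_erase.1 hk
    obtain ⟨u, hu, rfl⟩ := exists_mem_nbrsOfColour_heavyColour_eq hfree hf hj hdich
      (mem_erase.1 hkv).1 hkj
    exact ⟨u, hu, rfl⟩
  · rw [(hj v).2.1, card_erase_erase_of_ne (ZMod.card _) (hj v).1]

lemma isLBH_colourPair
    (hfree : ¬ Nonempty (completeBipartiteGraph (Fin 1) (Fin (p + 1)) ↪g G))
    (hf : IsStarColoring G f) (hj : ∀ v, IsHeavyColour G f p v (j v))
    (hdich : ∀ ⦃u v⦄, G.Adj u v → (j u = f v ↔ f u ≠ j v)) :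
    IsLBH G (LstarK (p + 2)) (colourPair f j fun v => (hj v).1) := by
  refine ⟨adj_colourPair hf hdich, fun v => ⟨fun u hu => adj_colourPair hf hdich hu, ?_, ?_⟩⟩
  · intro u hu u' hu' e
    have hf' : f u = f u' := (LKV.ext_iff.1 e).1
    have hj' : j u = j u' := (LKV.ext_iff.1 e).2
    change G.Adj v u at hu
    change G.Adj v u' at hu'
    by_cases hfu : f u = j v
    · exact injOn_heavyColour hfree hf hj hdich v (mem_nbrsOfColour.2 ⟨hu, hfu⟩)
        (mem_nbrsOfColour.2 ⟨hu', hf' ▸ hfu⟩) hj'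
    · exact card_le_one.1 ((hj v).2.2 _ (hf.1 hu).symm hfu).le u (mem_nbrsOfColour.2 ⟨hu, rfl⟩)
        u' (mem_nbrsOfColour.2 ⟨hu', hf'.symm⟩)
  · rintro y ⟨-, ⟨hjy, hfy⟩ | ⟨hyf, hyj⟩⟩
    · obtain ⟨u, hu, hju⟩ := exists_mem_nbrsOfColour_heavyColour_eq hfree hf hj hdich
        (Ne.symm hfy) fun e => y.2 (hjy.symm.trans e.symm)
      exact ⟨u, (mem_nbrsOfColour.1 hu).1,
        LKV.ext_iff.2 ⟨(mem_nbrsOfColour.1 hu).2.trans hjy, hju⟩⟩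
    · have hyv : y.1.1 ≠ f v := fun e => y.2 (e.trans hyf.symm)
      obtain ⟨w, hw⟩ := card_eq_one.1 ((hj v).2.2 _ hyv hyj)
      obtain ⟨hvw, hfw⟩ := mem_nbrsOfColour.1 (hw ▸ mem_singleton_self w)
      exact ⟨w, hvw, LKV.ext_iff.2 ⟨hfw, ((hdich hvw.symm).2 (hfw ▸ hyj)).trans hyf.symm⟩⟩

theorem IsStarColoring.exists_isLBH_lstarK (hf : IsStarColoring G f) (hp : 2 ≤ p)
    (hreg : G.IsRegularOfDegree (2 * p))
    (hfree : ¬ Nonempty (completeBipartiteGraph (Fin 1) (Fin (p + 1)) ↪g G)) :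
    ∃ ψ : V → LKV (p + 2), IsLBH G (LstarK (p + 2)) ψ := by
  choose j hj using hf.exists_isHeavyColour hp (ZMod.card _) hreg
  exact ⟨_, isLBH_colourPair hfree hf hj fun _ _ => hf.heavyColour_eq_iff hp (ZMod.card _) hreg hj⟩

end LocallyBijective

theorem stmt16 {V : Type*} [Fintype V] (p : ℕ) (hp : 2 ≤ p)
    (G : SimpleGraph V) [DecidableRel G.Adj] (hreg : G.IsRegularOfDegree (2 * p))
    (hfree : ¬ Nonempty (completeBipartiteGraph (Fin 1) (Fin (p + 1)) ↪g G)) :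
    (∃ f : V → Fin (p + 2), IsStarColoring G f) ↔
      ∃ psi : V → LKV (p + 2), IsLBH G (LstarK (p + 2)) psi := by
  constructor
  · rintro ⟨f, hf⟩
    exact IsStarColoring.exists_isLBH_lstarK (f := f) hf hp hreg hfree
  · rintro ⟨ψ, hψ⟩
    exact ⟨_, hψ.isStarColoring_fst⟩
end

section
/- Let p ≥ 2 and let G be a connected 2p-regular graph. Then G is locally linear (every edge lies in exactly one triangle) if and only if G contains no diamond (K_4 minus an edge) as an induced subgraph, no K_4, and no induced K_{1,p+1}. -/
open SimpleGraph

/-- The diamond graph: `K_4` minus the edge between vertices `2` and `3`. -/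
def Diamond : SimpleGraph (Fin 4) :=
  SimpleGraph.fromRel (fun a b => ¬((a = 2 ∧ b = 3) ∨ (a = 3 ∧ b = 2)))

/-!
Two distinct common neighbours of an edge span a diamond or a `K₄` with it, so freeness from
diamonds and `K₄` says exactly that every edge lies in at most one triangle. Then every
neighbourhood `N(u)` induces a graph of maximum degree at most one, and `uv` lies in no triangle
iff `v` is isolated in `N(u)`. If `N(u)` is a perfect matching on its `2p` vertices, an
independent set takes at most one endpoint of each matching edge, so it has at most `p` vertices.
If `N(u)` has an isolated vertex, the isolated vertices together with one endpoint of each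
matching edge form an independent set of more than `p` vertices, i.e. an induced `K_{1,p+1}`
centred at `u`.
-/

namespace SimpleGraph

variable {V : Type*} {G : SimpleGraph V}

open Finset

lemma existsUnique_commonNeighbors_iff (u v : V) :
    (∃! w, G.Adj u w ∧ G.Adj v w) ↔
      (G.commonNeighbors u v).Nonempty ∧ (G.commonNeighbors u v).Subsingleton :=
  Set.singleton_iff_unique_mem.symm.trans Set.exists_eq_singleton_iff_nonempty_subsingleton

lemma not_subsingleton_commonNeighbors_of_diamond_isContained (h : Diamond ⊑ G) :
    ∃ u v, G.Adj u v ∧ ¬(G.commonNeighbors u v).Subsingleton := by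
  obtain ⟨f⟩ := h
  have hadj {a b : Fin 4} (hab : Diamond.Adj a b) : G.Adj (f a) (f b) := f.toHom.map_adj hab
  refine ⟨f 0, f 1, hadj (by simp [Diamond]), fun hsub => ?_⟩
  have h23 : f 2 = f 3 :=
    hsub ⟨hadj (by simp [Diamond]), hadj (by simp [Diamond])⟩
      ⟨hadj (by simp [Diamond]), hadj (by simp [Diamond])⟩
  exact absurd (f.injective h23) (by decide)

lemma nonempty_diamond_embedding {u v a b : V} (huv : G.Adj u v) (hua : G.Adj u a)
    (hub : G.Adj u b) (hva : G.Adj v a) (hvb : G.Adj v b) (hab : a ≠ b) (hnab : ¬G.Adj a b) :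
    Nonempty (Diamond ↪g G) := by
  have hnba : ¬G.Adj b a := fun h => hnab h.symm
  refine ⟨⟨⟨![u, v, a, b], fun i j hij => ?_⟩, fun {i j} => ?_⟩⟩
  · fin_cases i <;> fin_cases j <;>
      simp_all [huv.ne, hua.ne, hub.ne, hva.ne, hvb.ne, huv.ne.symm, hua.ne.symm, hub.ne.symm,
        hva.ne.symm, hvb.ne.symm, hab.symm]
  · change G.Adj (![u, v, a, b] i) (![u, v, a, b] j) ↔ Diamond.Adj i j
    fin_cases i <;> fin_cases j <;>
      simp [Diamond, huv, hua, hub, hva, hvb, huv.symm, hua.symm, hub.symm, hva.symm, hvb.symm,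
        hnab, hnba]

theorem forall_commonNeighbors_subsingleton_iff :
    (∀ u v, G.Adj u v → (G.commonNeighbors u v).Subsingleton) ↔
      ¬Nonempty (Diamond ↪g G) ∧ G.CliqueFree 4 := by
  classical
  constructor
  · intro hsub
    have hfree : ¬Diamond ⊑ G := fun h => by
      obtain ⟨u, v, huv, hnot⟩ := not_subsingleton_commonNeighbors_of_diamond_isContained h
      exact hnot (hsub u v huv)
    refine ⟨fun ⟨f⟩ => hfree f.isContained, ?_⟩
    rw [← not_not (a := G.CliqueFree 4), not_cliqueFree_iff_top_isContained]
    exact fun h => hfree ((IsContained.of_le le_top).trans h)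
  · rintro ⟨hdiamond, hclique⟩ u v huv a ⟨hua : G.Adj u a, hva : G.Adj v a⟩ b
      ⟨hub : G.Adj u b, hvb : G.Adj v b⟩
    by_contra hab
    by_cases hadj : G.Adj a b
    · exact hclique _ <|
        (is3Clique_triple_iff.2 ⟨hva, hvb, hadj⟩).insert (a := u) (by simp [huv, hua, hub])
    · exact hdiamond (nonempty_diamond_embedding huv hua hub hva hvb hab hadj)

section AtMostOneNeighbor

variable {s : Finset V} (hs : ∀ a ∈ s, ∀ b ∈ s, ∀ c ∈ s, G.Adj a b → G.Adj a c → b = c)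
include hs

lemma two_mul_card_le_of_isIndepSet (hperfect : ∀ a ∈ s, ∃ b ∈ s, G.Adj a b) {t : Finset V}
    (hts : t ⊆ s) (ht : G.IsIndepSet t) : 2 * #t ≤ #s := by
  classical
  choose! σ hσs hσ using hperfect
  have hinj : Set.InjOn σ t := fun a ha b hb hab =>
    hs (σ a) (hσs a (hts ha)) a (hts ha) b (hts hb) (hσ a (hts ha)).symm
      (hab ▸ (hσ b (hts hb)).symm)
  have hdisj : Disjoint t (t.image σ) := by
    refine Finset.disjoint_left.2 fun b hb hbσ => ?_
    obtain ⟨a, ha, rfl⟩ := mem_image.1 hbσ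
    exact ht ha hb (hσ a (hts ha)).ne (hσ a (hts ha))
  calc 2 * #t = #t + #(t.image σ) := by rw [card_image_of_injOn hinj]; ring
    _ = #(t ∪ t.image σ) := (card_union_of_disjoint hdisj).symm
    _ ≤ #s := card_le_card (union_subset hts fun b hb => by
      obtain ⟨a, ha, rfl⟩ := mem_image.1 hb
      exact hσs a (hts ha))

lemma exists_isIndepSet_lt_two_mul_card {v : V} (hv : v ∈ s) (hvs : ∀ b ∈ s, ¬G.Adj v b) :
    ∃ t ⊆ s, G.IsIndepSet t ∧ #s < 2 * #t := by
  classical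
  let : LinearOrder V := IsWellOrder.linearOrder WellOrderingRel
  -- `t` keeps the smaller endpoint of each edge inside `s` (and the isolated vertices); every
  -- other vertex of `s` is sent injectively to its smaller partner, which is never `v`.
  set t := s.filter fun a => ∀ b ∈ s, G.Adj a b → a < b
  set r := s.filter fun a => ¬∀ b ∈ s, G.Adj a b → a < b
  have hvt : v ∈ t := mem_filter.2 ⟨hv, fun b hb hvb => absurd hvb (hvs b hb)⟩
  have hlower : ∀ a ∈ r, ∃ b ∈ s, G.Adj a b ∧ b < a := by
    intro a ha
    obtain ⟨has, hnot⟩ := mem_filter.1 ha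
    push Not at hnot
    obtain ⟨b, hb, hab, hba⟩ := hnot
    exact ⟨b, hb, hab, lt_of_le_of_ne hba hab.ne.symm⟩
  choose! σ hσs hσ hσlt using hlower
  have hmaps : Set.MapsTo σ r (t.erase v) := by
    intro a ha
    have has := (mem_filter.1 ha).1
    refine mem_erase.2 ⟨fun h => hvs a has (h ▸ (hσ a ha).symm), mem_filter.2 ⟨hσs a ha, ?_⟩⟩
    intro c hc hσc
    rw [← hs (σ a) (hσs a ha) a has c hc (hσ a ha).symm hσc]
    exact hσlt a ha
  have hinj : Set.InjOn σ r := fun a ha b hb hab =>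
    hs (σ a) (hσs a ha) a (mem_filter.1 ha).1 b (mem_filter.1 hb).1 (hσ a ha).symm
      (hab ▸ (hσ b hb).symm)
  have hr : #r ≤ #t - 1 := by
    simpa [card_erase_of_mem hvt] using card_le_card_of_injOn σ hmaps hinj
  have hsplit : #t + #r = #s := card_filter_add_card_filter_not _
  have ht : 0 < #t := card_pos.2 ⟨v, hvt⟩
  refine ⟨t, filter_subset _ _, fun a ha b hb hne hab => ?_, by omega⟩
  exact lt_asymm ((mem_filter.1 ha).2 b (mem_filter.1 hb).1 hab)
    ((mem_filter.1 hb).2 a (mem_filter.1 ha).1 hab.symm)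

end AtMostOneNeighbor

lemma nonempty_star_embedding_iff {n : ℕ} :
    Nonempty (completeBipartiteGraph (Fin 1) (Fin n) ↪g G) ↔
      ∃ u, ∃ t : Finset V, ↑t ⊆ G.neighborSet u ∧ G.IsIndepSet t ∧ n ≤ #t := by
  classical
  constructor
  · rintro ⟨f⟩
    let leaf : Fin n ↪ V := ⟨f ∘ Sum.inr, f.injective.comp Sum.inr_injective⟩
    refine ⟨f (.inl 0), univ.map leaf, ?_, ?_, by simp⟩
    · rw [coe_map, coe_univ, Set.image_univ, Set.range_subset_iff]
      exact fun i => f.map_rel_iff.2 (by simp)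
    · rw [coe_map, coe_univ, Set.image_univ]
      rintro _ ⟨i, rfl⟩ _ ⟨j, rfl⟩ - hij
      simpa [leaf] using f.map_rel_iff.1 hij
  · rintro ⟨u, t, htu, ht, hn⟩
    obtain ⟨t', ht't, hcard⟩ := exists_subset_card_eq hn
    let leaf : Fin n ↪ V := (t'.equivFinOfCardEq hcard).symm.toEmbedding.trans (.subtype _)
    have hleaf (i : Fin n) : leaf i ∈ t := ht't ((t'.equivFinOfCardEq hcard).symm i).2
    have hcentre (i : Fin n) : G.Adj u (leaf i) := htu (hleaf i)
    refine ⟨⟨⟨Sum.elim (fun _ => u) leaf, ?_⟩, fun {a b} => ?_⟩⟩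
    · rintro (a | a) (b | b) hab
      · exact congrArg Sum.inl (Subsingleton.elim a b)
      · exact absurd hab (hcentre b).ne
      · exact absurd hab.symm (hcentre a).ne
      · exact congrArg Sum.inr (leaf.injective hab)
    · change G.Adj (Sum.elim (fun _ => u) leaf a) (Sum.elim (fun _ => u) leaf b) ↔ _
      rcases a with a | a <;> rcases b with b | b
      · simp
      · simp [hcentre b]
      · simp [(hcentre a).symm]
      · simpa using fun h => ht (hleaf a) (hleaf b) h.ne h

theorem forall_commonNeighbors_nonempty_iff [Fintype V] [DecidableRel G.Adj] {p : ℕ}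
    (hreg : G.IsRegularOfDegree (2 * p))
    (hsub : ∀ u v, G.Adj u v → (G.commonNeighbors u v).Subsingleton) :
    (∀ u v, G.Adj u v → (G.commonNeighbors u v).Nonempty) ↔
      ¬Nonempty (completeBipartiteGraph (Fin 1) (Fin (p + 1)) ↪g G) := by
  have hcard (u : V) : #(G.neighborFinset u) = 2 * p := by
    rw [card_neighborFinset_eq_degree, hreg u]
  have hmatching (u : V) : ∀ a ∈ G.neighborFinset u, ∀ b ∈ G.neighborFinset u,
      ∀ c ∈ G.neighborFinset u, G.Adj a b → G.Adj a c → b = c := by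
    intro a ha b hb c hc hab hac
    rw [mem_neighborFinset] at ha hb hc
    exact hsub u a ha ⟨hb, hab⟩ ⟨hc, hac⟩
  rw [nonempty_star_embedding_iff]
  constructor
  · rintro hne ⟨u, t, htu, ht, hp⟩
    have hperfect : ∀ a ∈ G.neighborFinset u, ∃ b ∈ G.neighborFinset u, G.Adj a b := by
      intro a ha
      obtain ⟨b, hub, hab⟩ := hne u a ((mem_neighborFinset _ _ _).1 ha)
      exact ⟨b, (mem_neighborFinset _ _ _).2 hub, hab⟩
    have := two_mul_card_le_of_isIndepSet (hmatching u) hperfect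
      (fun a ha => (mem_neighborFinset _ _ _).2 (htu ha)) ht
    linarith [hcard u]
  · intro hstar u v huv
    by_contra hempty
    have hv : ∀ b ∈ G.neighborFinset u, ¬G.Adj v b := fun b hb hvb =>
      hempty ⟨b, (mem_neighborFinset _ _ _).1 hb, hvb⟩
    obtain ⟨t, htu, ht, hlt⟩ := exists_isIndepSet_lt_two_mul_card (hmatching u)
      ((mem_neighborFinset _ _ _).2 huv) hv
    refine hstar ⟨u, t, fun a ha => (mem_neighborFinset _ _ _).1 (htu ha), ht, ?_⟩
    linarith [hcard u]

end SimpleGraph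
theorem stmt17_general {V : Type*} [Fintype V] (p : ℕ)
    (G : SimpleGraph V) [DecidableRel G.Adj]
    (hreg : G.IsRegularOfDegree (2 * p)) :
    (∀ u v : V, G.Adj u v → ∃! w, G.Adj u w ∧ G.Adj v w) ↔
      (¬ Nonempty (Diamond ↪g G) ∧ G.CliqueFree 4 ∧
        ¬ Nonempty (completeBipartiteGraph (Fin 1) (Fin (p + 1)) ↪g G)) := by
  simp only [existsUnique_commonNeighbors_iff]
  rw [← and_assoc, ← forall_commonNeighbors_subsingleton_iff]
  constructor
  · intro h
    have hsub u v huv : (G.commonNeighbors u v).Subsingleton := (h u v huv).2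
    exact ⟨hsub, (forall_commonNeighbors_nonempty_iff hreg hsub).1 fun u v huv => (h u v huv).1⟩
  · rintro ⟨hsub, hstar⟩ u v huv
    exact ⟨(forall_commonNeighbors_nonempty_iff hreg hsub).2 hstar u v huv, hsub u v huv⟩

theorem stmt17 {V : Type*} [Fintype V] (p : ℕ) (hp : 2 ≤ p)
    (G : SimpleGraph V) [DecidableRel G.Adj]
    (hconn : G.Connected) (hreg : G.IsRegularOfDegree (2 * p)) :
    (∀ u v : V, G.Adj u v → ∃! w, G.Adj u w ∧ G.Adj v w) ↔
      (¬ Nonempty (Diamond ↪g G) ∧ G.CliqueFree 4 ∧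
        ¬ Nonempty (completeBipartiteGraph (Fin 1) (Fin (p + 1)) ↪g G)) :=
  stmt17_general p G hreg
end

section
/- Let G be a graph with a q-coloured MINI-orientation (G⃗, f). Then every triangle of G is oriented by G⃗ as a directed 3-cycle, and every 4-cycle (u,v,w,x) of G (not necessarily induced) is oriented either as a directed 4-cycle or with both u and w as sources (u→v, u→x, w→v, w→x). In particular, if (u,v) is an arc of G⃗ then (w,x) is an arc of G⃗. -/
open SimpleGraph

/-- `(A, f)` is a coloured MINI-orientation of `G`: a coloured in-orientation in which,
additionally, all in-neighbours of each vertex get the same colour. -/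
def IsColoredMINIOrientation {V α : Type*} (G : SimpleGraph V) (A : V → V → Prop)
    (f : V → α) : Prop :=
  IsOrientation G A ∧ IsProperColoring G f ∧
    (∀ v w x, A w v → A v x → f w ≠ f x) ∧
    (∀ v x₁ x₂, A v x₁ → A v x₂ → x₁ ≠ x₂ → f x₁ ≠ f x₂) ∧
    (∀ v w₁ w₂, A w₁ v → A w₂ v → f w₁ = f w₂)

theorem stmt18 {V : Type*} (G : SimpleGraph V) (q : ℕ)
    (A : V → V → Prop) (f : V → Fin q)
    (h : IsColoredMINIOrientation G A f) :
    (∀ u v w, G.Adj u v → G.Adj v w → G.Adj w u → A u v → A v w ∧ A w u) ∧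
    (∀ u v w x, G.Adj u v → G.Adj v w → G.Adj w x → G.Adj x u → u ≠ w → v ≠ x →
        A u v → ((A v w ∧ A w x ∧ A x u) ∨ (A u x ∧ A w v ∧ A w x))) ∧
    (∀ u v w x, G.Adj u v → G.Adj v w → G.Adj w x → G.Adj x u → u ≠ w → v ≠ x →
        A u v → A w x) := by
  obtain ⟨⟨hadj, hasym⟩, hprop, h3, h4, h5⟩ := h
  -- helper: orientation of an edge
  have hor : ∀ {u v}, G.Adj u v → ¬ A v u → A u v := by
    intro u v huv hnvu
    rcases (hadj u v).1 huv with h' | h'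
    · exact h'
    · exact absurd h' hnvu
  have tri : ∀ u v w, G.Adj u v → G.Adj v w → G.Adj w u → A u v → A v w ∧ A w u := by
    intro u v w huv hvw hwu hAuv
    have hvw' : A v w := by
      apply hor hvw
      intro hAwv
      exact hprop hwu.symm (h5 v u w hAuv hAwv)
    refine ⟨hvw', ?_⟩
    apply hor hwu
    intro hAuw
    exact hprop huv (h5 w v u hvw' hAuw).symm
  have quad : ∀ u v w x, G.Adj u v → G.Adj v w → G.Adj w x → G.Adj x u → u ≠ w → v ≠ x →
      A u v → ((A v w ∧ A w x ∧ A x u) ∨ (A u x ∧ A w v ∧ A w x)) := by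
    intro u v w x huv hvw hwx hxu huw hvx hAuv
    by_cases hxu' : A x u
    · -- directed 4-cycle
      left
      have hfxv : f x ≠ f v := h3 u x v hxu' hAuv
      have hvw' : A v w := by
        apply hor hvw
        intro hAwv
        have hfuw : f u = f w := h5 v u w hAuv hAwv
        by_cases hwx' : A w x
        · exact h3 x w u hwx' hxu' hfuw.symm
        · have hxw : A x w := hor hwx.symm hwx'
          exact h4 x u w hxu' hxw huw hfuw
      refine ⟨hvw', ?_, hxu'⟩
      apply hor hwx
      intro hAxw
      exact hfxv (h5 w x v hAxw hvw')
    · -- u is a source on edge ux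
      right
      have hux : A u x := hor hxu.symm hxu'
      have hfvx : f v ≠ f x := h4 u v x hAuv hux hvx
      have hwv : A w v := by
        apply hor hvw.symm
        intro hAvw
        by_cases hwx' : A w x
        · exact h3 v u w hAuv hAvw (h5 x u w hux hwx')
        · exact hfvx (h5 w v x hAvw (hor hwx.symm hwx'))
      refine ⟨hux, hwv, ?_⟩
      apply hor hwx
      intro hAxw
      have hfuw : f u = f w := h5 v u w hAuv hwv
      exact h3 x u w hux hAxw hfuw
  exact ⟨tri, quad, fun u v w x h1 h2 h3 h4 h5 h6 h7 => by
    rcases quad u v w x h1 h2 h3 h4 h5 h6 h7 with ⟨_, hwx, _⟩ | ⟨_, _, hwx⟩ <;> exact hwx⟩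
end

section
/- For every positive integer r, the circular ladder graph CL_{2r+1} (the Cartesian product of the cycle C_{2r+1} with K_2) does not admit a q-coloured MINI-orientation for any positive integer q. -/
/-!
In a MINI-orientation two opposite edges of a 4-cycle never point the same way: the two
in-neighbours of one tip share a colour, which clashes either with the distinct colours of two
out-neighbours or with the separation of in- and out-colours. So in `G □ K₂` the direction of
the rung at `v` flips along every edge of `G`, making `G` bipartite, which the odd cycle is not.
-/

open SimpleGraph

/-- The circular ladder graph `CL_t = C_t □ K_2`. -/
def CircularLadder (t : ℕ) : SimpleGraph (Fin t × Fin 2) :=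
  (SimpleGraph.cycleGraph t).boxProd (completeGraph (Fin 2))

variable {V α : Type*} {G : SimpleGraph V} {A : V → V → Prop} {f : V → α}

theorem IsOrientation.of_not (h : IsOrientation G A) {x y : V} (hxy : G.Adj x y)
    (hn : ¬ A x y) : A y x :=
  ((h.1 x y).mp hxy).resolve_left hn

theorem IsColoredMINIOrientation.not_parallel_of_square (h : IsColoredMINIOrientation G A f)
    {x₀ x₁ y₀ y₁ : V} (hx : G.Adj x₀ x₁) (hy : G.Adj y₀ y₁) (hne₀ : y₀ ≠ x₁) (hne₁ : y₁ ≠ x₀)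
    (hA₀ : A x₀ y₀) (hA₁ : A x₁ y₁) : False := by
  obtain ⟨⟨htot, -⟩, -, hinOut, houtDistinct, hinSame⟩ := h
  rcases (htot y₀ y₁).mp hy with hy' | hy'
  · have hcol : f x₁ = f y₀ := hinSame y₁ x₁ y₀ hA₁ hy'
    rcases (htot x₀ x₁).mp hx with hx' | hx'
    · exact houtDistinct x₀ y₀ x₁ hA₀ hx' hne₀ hcol.symm
    · exact hinOut x₀ x₁ y₀ hx' hA₀ hcol
  · have hcol : f x₀ = f y₁ := hinSame y₀ x₀ y₁ hA₀ hy'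
    rcases (htot x₀ x₁).mp hx with hx' | hx'
    · exact hinOut x₁ x₀ y₁ hx' hA₁ hcol
    · exact houtDistinct x₁ y₁ x₀ hA₁ hx' hne₁ hcol.symm

section BoxProdK2

variable {A : V × Fin 2 → V × Fin 2 → Prop} {f : V × Fin 2 → α}

theorem IsColoredMINIOrientation.rung_iff_not_rung
    (h : IsColoredMINIOrientation (G □ completeGraph (Fin 2)) A f) {u v : V} (huv : G.Adj u v) :
    A (v, 0) (v, 1) ↔ ¬ A (u, 0) (u, 1) := by
  have hrung : ∀ w : V, (G □ completeGraph (Fin 2)).Adj (w, 0) (w, 1) := fun w =>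
    boxProd_adj.mpr (Or.inr ⟨zero_ne_one, rfl⟩)
  have hparallel : ∀ a b : Fin 2, a ≠ b → A (u, a) (u, b) → A (v, a) (v, b) → False :=
    fun a b hab hu hv => h.not_parallel_of_square (x₀ := (u, a)) (x₁ := (v, a))
      (y₀ := (u, b)) (y₁ := (v, b)) (boxProd_adj.mpr (Or.inl ⟨huv, rfl⟩))
      (boxProd_adj.mpr (Or.inl ⟨huv, rfl⟩)) (fun he => hab (congrArg Prod.snd he).symm)
      (fun he => hab (congrArg Prod.snd he).symm) hu hv
  refine ⟨fun hv hu => hparallel 0 1 (by decide) hu hv, fun hu => ?_⟩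
  by_contra hv
  exact hparallel 1 0 (by decide) (h.1.of_not (hrung u) hu) (h.1.of_not (hrung v) hv)

theorem IsColoredMINIOrientation.colorable_two_of_boxProd
    (h : IsColoredMINIOrientation (G □ completeGraph (Fin 2)) A f) : G.Colorable 2 := by
  simpa [Fintype.card_prop] using
    (Coloring.mk (fun v => A (v, 0) (v, 1)) fun huv heq =>
      iff_not_self (heq ▸ h.rung_iff_not_rung huv) : G.Coloring Prop).colorable

end BoxProdK2

theorem stmt19_general (r : ℕ) (hr : 1 ≤ r) (q : ℕ) :
    ¬ ∃ (A : Fin (2 * r + 1) × Fin 2 → Fin (2 * r + 1) × Fin 2 → Prop)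
        (f : Fin (2 * r + 1) × Fin 2 → Fin q),
      IsColoredMINIOrientation (CircularLadder (2 * r + 1)) A f := by
  rintro ⟨A, f, h⟩
  have hχ := chromaticNumber_cycleGraph_of_odd (2 * r + 1) (by omega) (odd_two_mul_add_one r)
  have hle := h.colorable_two_of_boxProd.chromaticNumber_le
  exact absurd (hχ ▸ hle) (by decide)

theorem stmt19 (r : ℕ) (hr : 1 ≤ r) (q : ℕ) (hq : 0 < q) :
    ¬ ∃ (A : Fin (2 * r + 1) × Fin 2 → Fin (2 * r + 1) × Fin 2 → Prop)
        (f : Fin (2 * r + 1) × Fin 2 → Fin q),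
      IsColoredMINIOrientation (CircularLadder (2 * r + 1)) A f :=
  stmt19_general r hr q
end
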